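/- arXiv:1903.07203 — 11 statements merged into one kernel-verified Lean document; each statement's English description precedes it below -/
import Mathlib

section
/- Let M be an inverse monoid and H a closed inverse submonoid of M. Then the normalizer N(H) of H in M is a closed inverse submonoid of M: it contains the identity 1, it is closed under multiplication, it is closed under the inversion a ↦ a⁻¹, and it is upward closed in the natural partial order (if a ∈ N(H) and a ≤ b then b ∈ N(H)). -/
set_option linter.unusedSectionVars false

section Aux
variable {M : Type*} [Monoid M] (inv : M → M)
variable (hinv : ∀ a : M, a * inv a * a = a ∧ inv a * a * inv a = inv a)
variable (huniq : ∀ a b : M, a * b * a = a → b * a * b = b → b = inv a)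
include hinv huniq

private lemma inv_inv' (a : M) : inv (inv a) = a :=
  (huniq (inv a) a (hinv a).2 (hinv a).1).symm

private lemma inv_idem {e : M} (he : e * e = e) : inv e = e :=
  (huniq e e (by rw [he, he]) (by rw [he, he])).symm

private lemma idem_right (a : M) : (a * inv a) * (a * inv a) = a * inv a := by
  calc (a * inv a) * (a * inv a) = (a * inv a * a) * inv a := by simp only [mul_assoc]
  _ = a * inv a := by rw [(hinv a).1]

private lemma idem_left (a : M) : (inv a * a) * (inv a * a) = inv a * a := by
  calc (inv a * a) * (inv a * a) = (inv a * a * inv a) * a := by simp only [mul_assoc]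
  _ = inv a * a := by rw [(hinv a).2]

private lemma idem_mul {e f : M} (he : e * e = e) (hf : f * f = f) :
    (e * f) * (e * f) = e * f := by
  have h1 : (e * f) * (f * inv (e * f) * e) * (e * f) = e * f := by
    calc (e * f) * (f * inv (e * f) * e) * (e * f)
        = (e * (f * f)) * (inv (e * f) * ((e * e) * f)) := by simp only [mul_assoc]
    _ = (e * f) * (inv (e * f) * (e * f)) := by rw [he, hf]
    _ = (e * f) * inv (e * f) * (e * f) := by rw [← mul_assoc]
    _ = e * f := (hinv (e * f)).1
  have h2 : (f * inv (e * f) * e) * (e * f) * (f * inv (e * f) * e)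
      = f * inv (e * f) * e := by
    calc (f * inv (e * f) * e) * (e * f) * (f * inv (e * f) * e)
        = f * (inv (e * f) * ((e * e) * ((f * f) * (inv (e * f) * e)))) := by
          simp only [mul_assoc]
    _ = f * (inv (e * f) * (e * f) * inv (e * f)) * e := by rw [he, hf]; simp only [mul_assoc]
    _ = f * inv (e * f) * e := by rw [(hinv (e * f)).2]
  have hx : f * inv (e * f) * e = inv (e * f) := huniq (e * f) _ h1 h2
  have hxx : inv (e * f) * inv (e * f) = inv (e * f) := by
    conv_lhs => rw [← hx]
    calc (f * inv (e * f) * e) * (f * inv (e * f) * e)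
        = f * (inv (e * f) * (e * f) * inv (e * f)) * e := by simp only [mul_assoc]
    _ = f * inv (e * f) * e := by rw [(hinv (e * f)).2]
    _ = inv (e * f) := hx
  have h3 : e * f = inv (e * f) := by
    conv_lhs => rw [← inv_inv' inv hinv huniq (e * f)]
    rw [inv_idem inv hinv huniq hxx]
  rw [h3]; exact hxx

private lemma icomm {e f : M} (he : e * e = e) (hf : f * f = f) : e * f = f * e := by
  have hef := idem_mul inv hinv huniq he hf
  have hfe := idem_mul inv hinv huniq hf he
  have h1 : (e * f) * (f * e) * (e * f) = e * f := by
    calc (e * f) * (f * e) * (e * f)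
        = (e * (f * f)) * ((e * e) * f) := by simp only [mul_assoc]
    _ = (e * f) * (e * f) := by rw [he, hf]
    _ = e * f := hef
  have h2 : (f * e) * (e * f) * (f * e) = f * e := by
    calc (f * e) * (e * f) * (f * e)
        = (f * (e * e)) * ((f * f) * e) := by simp only [mul_assoc]
    _ = (f * e) * (f * e) := by rw [he, hf]
    _ = f * e := hfe
  have h := huniq (e * f) (f * e) h1 h2
  rw [h]
  exact (inv_idem inv hinv huniq hef).symm

private lemma inv_mul (a b : M) : inv (a * b) = inv b * inv a := by
  have h1 : (a * b) * (inv b * inv a) * (a * b) = a * b := by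
    calc (a * b) * (inv b * inv a) * (a * b)
        = a * ((b * inv b) * (inv a * a)) * b := by simp only [mul_assoc]
    _ = a * ((inv a * a) * (b * inv b)) * b := by
          rw [icomm inv hinv huniq (idem_right inv hinv huniq b) (idem_left inv hinv huniq a)]
    _ = (a * inv a * a) * (b * inv b * b) := by simp only [mul_assoc]
    _ = a * b := by rw [(hinv a).1, (hinv b).1]
  have h2 : (inv b * inv a) * (a * b) * (inv b * inv a) = inv b * inv a := by
    calc (inv b * inv a) * (a * b) * (inv b * inv a)
        = inv b * ((inv a * a) * (b * inv b)) * inv a := by simp only [mul_assoc]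
    _ = inv b * ((b * inv b) * (inv a * a)) * inv a := by
          rw [← icomm inv hinv huniq (idem_right inv hinv huniq b) (idem_left inv hinv huniq a)]
    _ = (inv b * b * inv b) * (inv a * a * inv a) := by simp only [mul_assoc]
    _ = inv b * inv a := by rw [(hinv b).2, (hinv a).2]
  exact (huniq (a * b) (inv b * inv a) h1 h2).symm

private lemma swapR {e : M} (he : e * e = e) (x : M) :
    x * e = (x * e * inv x) * x ∧ (x * e * inv x) * (x * e * inv x) = x * e * inv x := by
  constructor
  · calc x * e = (x * inv x * x) * e := by rw [(hinv x).1]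
    _ = x * ((inv x * x) * e) := by simp only [mul_assoc]
    _ = x * (e * (inv x * x)) := by
          rw [← icomm inv hinv huniq he (idem_left inv hinv huniq x)]
    _ = (x * e * inv x) * x := by simp only [mul_assoc]
  · calc (x * e * inv x) * (x * e * inv x)
        = x * ((e * (inv x * x)) * (e * inv x)) := by simp only [mul_assoc]
    _ = x * (((inv x * x) * e) * (e * inv x)) := by
          rw [icomm inv hinv huniq he (idem_left inv hinv huniq x)]
    _ = (x * inv x * x) * ((e * e) * inv x) := by simp only [mul_assoc]
    _ = x * e * inv x := by rw [(hinv x).1, he, ← mul_assoc]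

private lemma swapL {e : M} (he : e * e = e) (y : M) :
    e * y = y * (inv y * e * y) ∧ (inv y * e * y) * (inv y * e * y) = inv y * e * y := by
  constructor
  · calc e * y = e * (y * inv y * y) := by rw [(hinv y).1]
    _ = (e * (y * inv y)) * y := by simp only [mul_assoc]
    _ = ((y * inv y) * e) * y := by
          rw [icomm inv hinv huniq he (idem_right inv hinv huniq y)]
    _ = y * (inv y * e * y) := by simp only [mul_assoc]
  · calc (inv y * e * y) * (inv y * e * y)
        = inv y * ((e * (y * inv y)) * (e * y)) := by simp only [mul_assoc]
    _ = inv y * (((y * inv y) * e) * (e * y)) := by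
          rw [icomm inv hinv huniq he (idem_right inv hinv huniq y)]
    _ = (inv y * y * inv y) * ((e * e) * y) := by simp only [mul_assoc]
    _ = inv y * e * y := by rw [(hinv y).2, he, ← mul_assoc]

private lemma key {e : M} (he : e * e = e) (x y : M) :
    ∃ g : M, g * g = g ∧ x * e * y = g * (x * y) := by
  obtain ⟨hL, hLi⟩ := swapL inv hinv huniq he y
  obtain ⟨hR, hRi⟩ := swapR inv hinv huniq hLi (x * y)
  refine ⟨(x * y) * (inv y * e * y) * inv (x * y), hRi, ?_⟩
  calc x * e * y = x * (e * y) := mul_assoc x e y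
  _ = x * (y * (inv y * e * y)) := by rw [hL]
  _ = (x * y) * (inv y * e * y) := (mul_assoc x y _).symm
  _ = ((x * y) * (inv y * e * y) * inv (x * y)) * (x * y) := hR

end Aux



/-- The natural partial order on an inverse monoid: `a ≤ b` iff `a = e * b`
for some idempotent `e`. -/
def NatLe {M : Type*} [Monoid M] (a b : M) : Prop :=
  ∃ e : M, e * e = e ∧ a = e * b

/-- `H` is a closed inverse submonoid of `M` (with inversion map `inv`):
it contains `1`, is closed under multiplication, is closed under inversion,
and is upward closed in the natural partial order. -/
def IsClosedInvSubmonoid {M : Type*} [Monoid M] (inv : M → M) (H : Set M) : Prop :=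
  (1 : M) ∈ H ∧ (∀ a ∈ H, ∀ b ∈ H, a * b ∈ H) ∧ (∀ a ∈ H, inv a ∈ H) ∧
    (∀ a ∈ H, ∀ b : M, NatLe a b → b ∈ H)

/-- The normalizer of `H` in `M`. -/
def Normalizer {M : Type*} [Monoid M] (inv : M → M) (H : Set M) : Set M :=
  {a : M | ∀ h ∈ H, a * h * inv a ∈ H ∧ inv a * h * a ∈ H}

/-- The normalizer of a closed inverse submonoid of an inverse monoid is itself a
closed inverse submonoid. -/
theorem normalizer_isClosedInvSubmonoid {M : Type*} [Monoid M] (inv : M → M)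
    (hinv : ∀ a : M, a * inv a * a = a ∧ inv a * a * inv a = inv a)
    (huniq : ∀ a b : M, a * b * a = a → b * a * b = b → b = inv a)
    (H : Set M) (hH : IsClosedInvSubmonoid inv H) :
    IsClosedInvSubmonoid inv (Normalizer inv H) := by
  obtain ⟨h1H, hmulH, hinvH, hup⟩ := hH
  refine ⟨?_, ?_, ?_, ?_⟩
  · intro h hh
    have h1 : inv (1 : M) = 1 := inv_idem inv hinv huniq (one_mul 1)
    constructor <;> simp [h1, hh]
  · intro a ha b hb h hh
    have hiab := inv_mul inv hinv huniq a b
    constructor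
    · have heq : a * b * h * inv (a * b) = a * (b * h * inv b) * inv a := by
        rw [hiab]; simp only [mul_assoc]
      rw [heq]; exact (ha _ (hb h hh).1).1
    · have heq : inv (a * b) * h * (a * b) = inv b * (inv a * h * a) * b := by
        rw [hiab]; simp only [mul_assoc]
      rw [heq]; exact (hb _ (ha h hh).2).2
  · intro a ha h hh
    have hia := inv_inv' inv hinv huniq a
    exact ⟨by rw [hia]; exact (ha h hh).2, by rw [hia]; exact (ha h hh).1⟩
  · rintro a ha b ⟨e, he, hab⟩ h hh
    have hie : inv e = e := inv_idem inv hinv huniq he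
    have hiab : inv a = inv b * e := by rw [hab, inv_mul inv hinv huniq, hie]
    constructor
    · obtain ⟨hs, hsi⟩ := swapR inv hinv huniq he (b * h * inv b)
      have heq : a * h * inv a
          = (e * (b * h * inv b * e * inv (b * h * inv b))) * (b * h * inv b) := by
        rw [hiab, hab]
        calc (e * b) * h * (inv b * e) = e * (b * h * inv b * e) := by simp only [mul_assoc]
        _ = e * ((b * h * inv b * e * inv (b * h * inv b)) * (b * h * inv b)) := by rw [← hs]
        _ = (e * (b * h * inv b * e * inv (b * h * inv b))) * (b * h * inv b) := by
              rw [← mul_assoc]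
      exact hup _ (ha h hh).1 _ ⟨_, idem_mul inv hinv huniq he hsi, heq⟩
    · obtain ⟨hsL, hLi⟩ := swapL inv hinv huniq he h
      obtain ⟨g2, hg2, hkey⟩ := key inv hinv huniq
        (idem_mul inv hinv huniq hLi he) (inv b * h) b
      have heq : inv a * h * a = g2 * (inv b * h * b) := by
        rw [hiab, hab]
        calc (inv b * e) * h * (e * b) = inv b * (e * h) * (e * b) := by simp only [mul_assoc]
        _ = inv b * (h * (inv h * e * h)) * (e * b) := by rw [hsL]
        _ = (inv b * h) * ((inv h * e * h) * e) * b := by simp only [mul_assoc]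
        _ = g2 * (inv b * h * b) := hkey
      exact hup _ (ha h hh).2 _ ⟨g2, hg2, heq⟩
end

section
/- Let M be an inverse monoid, H a closed inverse submonoid of M, and a ∈ N(H). Then one has the set equalities a H a⁻¹ = (a * a⁻¹) H (a * a⁻¹) and a H (a⁻¹ * a) = (a * a⁻¹) H a, where a H a⁻¹ denotes {a * h * a⁻¹ : h ∈ H}, (a * a⁻¹) H (a * a⁻¹) denotes {a * a⁻¹ * h * a * a⁻¹ : h ∈ H}, a H (a⁻¹ * a) denotes {a * h * a⁻¹ * a : h ∈ H}, and (a * a⁻¹) H a denotes {a * a⁻¹ * h * a : h ∈ H}. -/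
/-- For `a` in the normalizer of a closed inverse submonoid `H`, one has
`a H a⁻¹ = (a a⁻¹) H (a a⁻¹)` and `a H (a⁻¹ a) = (a a⁻¹) H a`. -/
theorem conj_set_eq_of_mem_normalizer {M : Type*} [Monoid M] (inv : M → M)
    (hinv : ∀ a : M, a * inv a * a = a ∧ inv a * a * inv a = inv a)
    (huniq : ∀ a b : M, a * b * a = a → b * a * b = b → b = inv a)
    (H : Set M) (hH : IsClosedInvSubmonoid inv H)
    (a : M) (ha : a ∈ Normalizer inv H) :
    {x : M | ∃ h ∈ H, x = a * h * inv a} =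
        {x : M | ∃ h ∈ H, x = (a * inv a) * h * (a * inv a)} ∧
      {x : M | ∃ h ∈ H, x = a * h * (inv a * a)} =
        {x : M | ∃ h ∈ H, x = (a * inv a) * h * a} := by
  have L1 : ∀ t : M, a * (inv a * (a * t)) = a * t := by
    intro t; rw [← mul_assoc, ← mul_assoc, (hinv a).1]
  have L1' : a * (inv a * a) = a := by rw [← mul_assoc, (hinv a).1]
  have L2' : inv a * (a * inv a) = inv a := by rw [← mul_assoc, (hinv a).2]
  constructor
  · ext x
    simp only [Set.mem_setOf_eq]
    constructor
    · rintro ⟨h, hh, rfl⟩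
      exact ⟨a * h * inv a, (ha h hh).1, by simp only [mul_assoc, L2', L1]⟩
    · rintro ⟨h, hh, rfl⟩
      exact ⟨inv a * h * a, (ha h hh).2, by simp only [mul_assoc]⟩
  · ext x
    simp only [Set.mem_setOf_eq]
    constructor
    · rintro ⟨h, hh, rfl⟩
      exact ⟨a * h * inv a, (ha h hh).1, by simp only [mul_assoc, L1]⟩
    · rintro ⟨h, hh, rfl⟩
      exact ⟨inv a * h * a, (ha h hh).2, by simp only [mul_assoc, L1']⟩
end

section
/- Let M be an inverse monoid and H a closed inverse submonoid of M. If a ∈ N(H), then a * a⁻¹ ∈ H and a⁻¹ * a ∈ H (so that both the right ω-coset (Ha)^ω and the left ω-coset (aH)^ω are defined), and (Ha)^ω = (aH)^ω as subsets of M. -/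
/-- The right ω-coset `(Hm)^ω`. -/
def ROmega {M : Type*} [Monoid M] (H : Set M) (m : M) : Set M :=
  {x : M | ∃ h ∈ H, NatLe (h * m) x}

/-- The left ω-coset `(mH)^ω`. -/
def LOmega {M : Type*} [Monoid M] (H : Set M) (m : M) : Set M :=
  {x : M | ∃ h ∈ H, NatLe (m * h) x}

section Aux
variable {M : Type*} [Monoid M] (inv : M → M)

/-- Idempotents are their own inverses. -/
lemma invm_idem (huniq : ∀ a b : M, a * b * a = a → b * a * b = b → b = inv a)
    {e : M} (he : e * e = e) : inv e = e :=
  (huniq e e (by rw [he, he]) (by rw [he, he])).symm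

/-- Products of idempotents are idempotent. -/
lemma idem_mul_idem (hinv : ∀ a : M, a * inv a * a = a ∧ inv a * a * inv a = inv a)
    (huniq : ∀ a b : M, a * b * a = a → b * a * b = b → b = inv a)
    {e f : M} (he : e * e = e) (hf : f * f = f) :
    (e * f) * (e * f) = e * f := by
  set x := inv (e * f) with hxdef
  have hx1 : (e * f) * x * (e * f) = e * f := (hinv (e * f)).1
  have hx2 : x * (e * f) * x = x := (hinv (e * f)).2
  have hx2' : x * (e * (f * x)) = x := by simpa only [mul_assoc] using hx2
  have hA : (e * f) * (f * x * e) * (e * f) = e * f := by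
    calc (e * f) * (f * x * e) * (e * f)
        = e * ((f * f) * (x * ((e * e) * f))) := by simp only [mul_assoc]
      _ = e * (f * (x * (e * f))) := by rw [he, hf]
      _ = (e * f) * x * (e * f) := by simp only [mul_assoc]
      _ = e * f := hx1
  have hB : (f * x * e) * (e * f) * (f * x * e) = f * x * e := by
    calc (f * x * e) * (e * f) * (f * x * e)
        = f * (x * ((e * e) * ((f * f) * (x * e)))) := by simp only [mul_assoc]
      _ = f * (x * (e * (f * (x * e)))) := by rw [he, hf]
      _ = f * ((x * (e * (f * x))) * e) := by simp only [mul_assoc]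
      _ = f * x * e := by rw [hx2', mul_assoc]
  have hxe : f * x * e = x := huniq (e * f) (f * x * e) hA hB
  have hxx : (f * x * e) * (f * x * e) = f * x * e := by
    calc (f * x * e) * (f * x * e)
        = f * ((x * (e * (f * x))) * e) := by simp only [mul_assoc]
      _ = f * x * e := by rw [hx2', mul_assoc]
  have hxid : x * x = x := by rw [hxe] at hxx; exact hxx
  have hef : e * f = inv x := huniq x (e * f) hx2 hx1
  rw [hef, invm_idem inv huniq hxid]
  exact hxid

/-- Idempotents commute. -/
lemma idem_comm (hinv : ∀ a : M, a * inv a * a = a ∧ inv a * a * inv a = inv a)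
    (huniq : ∀ a b : M, a * b * a = a → b * a * b = b → b = inv a)
    {e f : M} (he : e * e = e) (hf : f * f = f) :
    e * f = f * e := by
  have hef := idem_mul_idem inv hinv huniq he hf
  have hfe := idem_mul_idem inv hinv huniq hf he
  have h1 : (e * f) * (f * e) * (e * f) = e * f := by
    calc (e * f) * (f * e) * (e * f)
        = e * ((f * f) * ((e * e) * f)) := by simp only [mul_assoc]
      _ = (e * f) * (e * f) := by rw [he, hf]; simp only [mul_assoc]
      _ = e * f := hef
  have h2 : (f * e) * (e * f) * (f * e) = f * e := by
    calc (f * e) * (e * f) * (f * e)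
        = f * ((e * e) * ((f * f) * e)) := by simp only [mul_assoc]
      _ = (f * e) * (f * e) := by rw [he, hf]; simp only [mul_assoc]
      _ = f * e := hfe
  have := huniq (e * f) (f * e) h1 h2
  rw [this, invm_idem inv huniq hef]

/-- `a ≤ b` if `a = b * f` for an idempotent `f`. -/
lemma natle_of_right (hinv : ∀ a : M, a * inv a * a = a ∧ inv a * a * inv a = inv a)
    (huniq : ∀ a b : M, a * b * a = a → b * a * b = b → b = inv a)
    {a b f : M} (hf : f * f = f) (hab : a = b * f) : NatLe a b := by
  have hq : (inv b * b) * (inv b * b) = inv b * b := by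
    rw [← mul_assoc, (hinv b).2]
  have hcomm : f * (inv b * b) = (inv b * b) * f := idem_comm inv hinv huniq hf hq
  refine ⟨b * f * inv b, ?_, ?_⟩
  · calc (b * f * inv b) * (b * f * inv b)
        = b * ((f * (inv b * b)) * (f * inv b)) := by simp only [mul_assoc]
      _ = b * (((inv b * b) * f) * (f * inv b)) := by rw [hcomm]
      _ = (b * inv b * b) * ((f * f) * inv b) := by simp only [mul_assoc]
      _ = b * (f * inv b) := by rw [hf, (hinv b).1]
      _ = b * f * inv b := by rw [mul_assoc]
  · rw [hab]
    calc b * f = (b * inv b * b) * f := by rw [(hinv b).1]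
      _ = b * ((inv b * b) * f) := by simp only [mul_assoc]
      _ = b * (f * (inv b * b)) := by rw [hcomm]
      _ = (b * f * inv b) * b := by simp only [mul_assoc]

/-- Conversely, `a ≤ b` implies `a = b * f` for an idempotent `f`. -/
lemma natle_to_right (hinv : ∀ a : M, a * inv a * a = a ∧ inv a * a * inv a = inv a)
    (huniq : ∀ a b : M, a * b * a = a → b * a * b = b → b = inv a)
    {a b : M} (h : NatLe a b) : ∃ f : M, f * f = f ∧ a = b * f := by
  obtain ⟨e, he, hab⟩ := h
  have hp : (b * inv b) * (b * inv b) = b * inv b := by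
    rw [← mul_assoc, (hinv b).1]
  have hcomm : e * (b * inv b) = (b * inv b) * e := idem_comm inv hinv huniq he hp
  refine ⟨inv b * e * b, ?_, ?_⟩
  · calc (inv b * e * b) * (inv b * e * b)
        = inv b * ((e * (b * inv b)) * (e * b)) := by simp only [mul_assoc]
      _ = inv b * (((b * inv b) * e) * (e * b)) := by rw [hcomm]
      _ = (inv b * b * inv b) * ((e * e) * b) := by simp only [mul_assoc]
      _ = inv b * (e * b) := by rw [he, (hinv b).2]
      _ = inv b * e * b := by rw [mul_assoc]
  · rw [hab]
    calc e * b = e * (b * inv b * b) := by rw [(hinv b).1]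
      _ = (e * (b * inv b)) * b := by simp only [mul_assoc]
      _ = ((b * inv b) * e) * b := by rw [hcomm]
      _ = b * (inv b * e * b) := by simp only [mul_assoc]

end Aux

/-- If `a` lies in the normalizer of a closed inverse submonoid `H`, then
`a * a⁻¹ ∈ H` and `a⁻¹ * a ∈ H` (so both ω-cosets are defined), and the right
ω-coset `(Ha)^ω` equals the left ω-coset `(aH)^ω`. -/
theorem rOmega_eq_lOmega_of_mem_normalizer {M : Type*} [Monoid M] (inv : M → M)
    (hinv : ∀ a : M, a * inv a * a = a ∧ inv a * a * inv a = inv a)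
    (huniq : ∀ a b : M, a * b * a = a → b * a * b = b → b = inv a)
    (H : Set M) (hH : IsClosedInvSubmonoid inv H)
    (a : M) (ha : a ∈ Normalizer inv H) :
    a * inv a ∈ H ∧ inv a * a ∈ H ∧ ROmega H a = LOmega H a := by
  obtain ⟨hone, hmul, hHinv, hup⟩ := hH
  have hp : a * inv a ∈ H := by
    have := (ha 1 hone).1; rwa [mul_one] at this
  have hq : inv a * a ∈ H := by
    have := (ha 1 hone).2; rwa [mul_one] at this
  have hpid : (a * inv a) * (a * inv a) = a * inv a := by
    rw [← mul_assoc, (hinv a).1]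
  have hqid : (inv a * a) * (inv a * a) = inv a * a := by
    rw [← mul_assoc, (hinv a).2]
  refine ⟨hp, hq, ?_⟩
  ext x
  constructor
  · rintro ⟨h, hh, e, he, hx⟩
    refine ⟨inv a * h * a, (ha h hh).2, (a * inv a) * e,
      idem_mul_idem inv hinv huniq hpid he, ?_⟩
    calc a * (inv a * h * a)
        = (a * inv a) * (h * a) := by simp only [mul_assoc]
      _ = (a * inv a) * (e * x) := by rw [hx]
      _ = ((a * inv a) * e) * x := by simp only [mul_assoc]
  · rintro ⟨h, hh, hle⟩
    obtain ⟨f, hf, hx⟩ := natle_to_right inv hinv huniq hle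
    refine ⟨a * h * inv a, (ha h hh).1,
      natle_of_right inv hinv huniq
        (idem_mul_idem inv hinv huniq hf hqid) ?_⟩
    calc (a * h * inv a) * a
        = (a * h) * (inv a * a) := by simp only [mul_assoc]
      _ = (x * f) * (inv a * a) := by rw [hx]
      _ = x * (f * (inv a * a)) := by rw [mul_assoc]
end

section
/- Let M be an inverse monoid. On the set of closed inverse submonoids of M, the conjugacy relation H ≈ K, defined by: there exists m ∈ M with m * h * m⁻¹ ∈ K for all h ∈ H and m⁻¹ * k * m ∈ H for all k ∈ K, is an equivalence relation (reflexive, symmetric and transitive). -/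
/-- Conjugacy of closed inverse submonoids: `H ≈ K` iff there is `m ∈ M` with
`m H m⁻¹ ⊆ K` and `m⁻¹ K m ⊆ H`. -/
def ConjCIS {M : Type*} [Monoid M] (inv : M → M) (H K : Set M) : Prop :=
  ∃ m : M, (∀ h ∈ H, m * h * inv m ∈ K) ∧ (∀ k ∈ K, inv m * k * m ∈ H)

/-- Conjugacy is an equivalence relation on the set of closed inverse submonoids of an
inverse monoid. -/
theorem conjCIS_equivalence {M : Type*} [Monoid M] (inv : M → M)
    (hinv : ∀ a : M, a * inv a * a = a ∧ inv a * a * inv a = inv a)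
    (huniq : ∀ a b : M, a * b * a = a → b * a * b = b → b = inv a) :
    (∀ H : Set M, IsClosedInvSubmonoid inv H → ConjCIS inv H H) ∧
      (∀ H K : Set M, IsClosedInvSubmonoid inv H → IsClosedInvSubmonoid inv K →
        ConjCIS inv H K → ConjCIS inv K H) ∧
      (∀ H K L : Set M, IsClosedInvSubmonoid inv H → IsClosedInvSubmonoid inv K →
        IsClosedInvSubmonoid inv L →
        ConjCIS inv H K → ConjCIS inv K L → ConjCIS inv H L) := by
  have inv_one : inv (1 : M) = 1 := (huniq 1 1 (by simp) (by simp)).symm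
  have inv_inv : ∀ a : M, inv (inv a) = a := fun a =>
    (huniq (inv a) a (hinv a).2 (hinv a).1).symm
  have inv_idem : ∀ e : M, e * e = e → inv e = e := fun e he =>
    (huniq e e (by rw [he, he]) (by rw [he, he])).symm
  -- parametrized rewriting helpers
  have idemx : ∀ e : M, e * e = e → ∀ x : M, e * (e * x) = e * x := fun e he x => by
    have := congrArg (· * x) he; simpa [mul_assoc] using this
  -- product of idempotents is idempotent
  have idem_mul : ∀ e f : M, e * e = e → f * f = f → (e * f) * (e * f) = e * f := by
    intro e f he hf
    have he' := idemx e he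
    have hf' := idemx f hf
    set b := inv (e * f) with hb
    have hb1 : (e * f) * b * (e * f) = e * f := (hinv (e * f)).1
    have hb2 : b * (e * f) * b = b := (hinv (e * f)).2
    have hb1' : e * (f * (b * (e * f))) = e * f := by simpa [mul_assoc] using hb1
    have hb2x : ∀ x : M, b * (e * (f * (b * x))) = b * x := fun x => by
      have := congrArg (· * x) hb2; simpa [mul_assoc] using this
    have p : (e * f) * (f * b * e) * (e * f) = e * f := by
      simp only [mul_assoc]
      rw [hf', he']
      exact hb1'
    have q : (f * b * e) * (e * f) * (f * b * e) = f * b * e := by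
      simp only [mul_assoc]
      rw [he', hf', hb2x]
    have hc : f * b * e = b := by rw [hb]; exact huniq _ _ p q
    have hc' : f * (b * e) = b := by simpa [mul_assoc] using hc
    have hbid : b * b = b := by
      calc b * b = (f * b * e) * (f * b * e) := by rw [hc]
        _ = b := by simp only [mul_assoc]; rw [hb2x]; exact hc'
    have h4 : e * f = inv b := huniq b (e * f) hb2 hb1
    have h6 : e * f = b := h4.trans (inv_idem b hbid)
    rw [h6]; exact hbid
  have idem_comm : ∀ e f : M, e * e = e → f * f = f → e * f = f * e := by
    intro e f he hf
    have he' := idemx e he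
    have hf' := idemx f hf
    have h1 : (e * f) * (e * f) = e * f := idem_mul e f he hf
    have h2 : (f * e) * (f * e) = f * e := idem_mul f e hf he
    have h1' : e * (f * (e * f)) = e * f := by simpa [mul_assoc] using h1
    have h2' : f * (e * (f * e)) = f * e := by simpa [mul_assoc] using h2
    have p : (e * f) * (f * e) * (e * f) = e * f := by
      simp only [mul_assoc]; rw [hf', he']; exact h1'
    have q : (f * e) * (e * f) * (f * e) = f * e := by
      simp only [mul_assoc]; rw [he', hf']; exact h2'
    have claim : f * e = inv (e * f) := huniq (e * f) (f * e) p q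
    rw [claim, inv_idem (e * f) h1]
  have tri : ∀ a x : M, a * (inv a * (a * x)) = a * x := fun a x => by
    have := congrArg (· * x) (hinv a).1; simpa [mul_assoc] using this
  have tri' : ∀ a x : M, inv a * (a * (inv a * x)) = inv a * x := fun a x => by
    have := congrArg (· * x) (hinv a).2; simpa [mul_assoc] using this
  have inv_mul : ∀ a b : M, inv (a * b) = inv b * inv a := by
    intro a b
    have heb : (b * inv b) * (b * inv b) = b * inv b := by
      have := congrArg (· * inv b) (hinv b).1; simpa [mul_assoc] using this
    have hia : (inv a * a) * (inv a * a) = inv a * a := by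
      have := congrArg (· * a) (hinv a).2; simpa [mul_assoc] using this
    have hswap : ∀ x : M, b * (inv b * (inv a * (a * x))) = inv a * (a * (b * (inv b * x))) :=
      fun x => by
        have := congrArg (· * x) (idem_comm _ _ heb hia)
        simpa [mul_assoc] using this
    symm; apply huniq
    · show (a * b) * (inv b * inv a) * (a * b) = a * b
      simp only [mul_assoc]
      rw [hswap, tri a]
      have h2 : b * (inv b * b) = b := by simpa [mul_assoc] using (hinv b).1
      rw [h2]
    · show (inv b * inv a) * (a * b) * (inv b * inv a) = inv b * inv a
      simp only [mul_assoc]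
      rw [← hswap (inv a), tri' b]
      have h2a : inv a * (a * inv a) = inv a := by simpa [mul_assoc] using (hinv a).2
      rw [h2a]
  refine ⟨?_, ?_, ?_⟩
  · intro H hH
    exact ⟨1, fun h hh => by simpa [inv_one] using hh, fun k hk => by simpa [inv_one] using hk⟩
  · rintro H K hH hK ⟨m, h1, h2⟩
    exact ⟨inv m, fun k hk => by simpa [inv_inv] using h2 k hk,
      fun h hh => by simpa [inv_inv] using h1 h hh⟩
  · rintro H K L hH hK hL ⟨m, h1, h2⟩ ⟨n, h3, h4⟩
    refine ⟨n * m, fun h hh => ?_, fun l hl => ?_⟩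
    · have := h3 _ (h1 h hh)
      rw [inv_mul]
      simpa [mul_assoc] using this
    · have := h2 _ (h4 l hl)
      rw [inv_mul]
      simpa [mul_assoc] using this
end

section
/- Let Γ, Γ' and Δ be graphs with Γ connected, let h : Γ' → Δ be an immersion, and let f, g : Γ → Γ' be graph morphisms with h ∘ f = h ∘ g. If f(v) = g(v) for some vertex v of Γ, then f = g (they agree on all vertices and all arrows). In particular, an immersion between connected graphs is uniquely determined by the image of a single vertex among all morphisms with the same labeling. -/
open Quiver

/-- A graph morphism between graphs in the sense of Serre (quivers with involutive
reverse) preserves the reverse operation. -/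
def PreservesReverse {U V : Type*} [Quiver U] [Quiver V]
    [HasInvolutiveReverse U] [HasInvolutiveReverse V] (f : U ⥤q V) : Prop :=
  ∀ ⦃a b : U⦄ (e : a ⟶ b), f.map (reverse e) = reverse (f.map e)

/-- A morphism of graphs is an immersion if it is injective on each star. -/
def IsImmersion {U V : Type*} [Quiver U] [Quiver V] (f : U ⥤q V) : Prop :=
  ∀ u : U, Function.Injective (f.star u)

/-- A graph is connected if any two vertices are joined by a path. -/
def IsConnectedQuiver (U : Type*) [Quiver U] : Prop :=
  ∀ u v : U, Nonempty (Path u v)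

/-- The action of a prefunctor on the total set of arrows. -/
def arrowMap {U V : Type*} [Quiver U] [Quiver V] (f : U ⥤q V) :
    (Σ u w : U, u ⟶ w) → (Σ u w : V, u ⟶ w) :=
  fun a => ⟨f.obj a.1, f.obj a.2.1, f.map a.2.2⟩


private lemma immersion_arrow_eq {V W : Type*} [Quiver V] [Quiver W]
    (h : V ⥤q W) (himm : IsImmersion h)
    {x x' y y' : V} (p : x ⟶ y) (q : x' ⟶ y') (hx : x = x')
    (hq : (⟨h.obj x, h.obj y, h.map p⟩ : Σ a b : W, a ⟶ b) = ⟨h.obj x', h.obj y', h.map q⟩) :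
    (⟨x, y, p⟩ : Σ a b : V, a ⟶ b) = ⟨x', y', q⟩ := by
  subst hx
  injection hq with h1 h2
  have h3 : (⟨h.obj y, h.map p⟩ : Star (h.obj x)) = ⟨h.obj y', h.map q⟩ := h2
  have h4 : (⟨y, p⟩ : Star x) = ⟨y', q⟩ := himm x h3
  injection h4 with hy hp
  subst hy
  rw [eq_of_heq hp]

/-- Two graph morphisms from a connected graph which become equal after composing with
an immersion, and which agree at one vertex, are equal. In particular an immersion
between connected graphs is determined by the image of a single vertex. -/
theorem eq_of_comp_immersion_eq_of_agree {Γ Γ' Δ : Type*}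
    [Quiver Γ] [Quiver Γ'] [Quiver Δ]
    [HasInvolutiveReverse Γ] [HasInvolutiveReverse Γ'] [HasInvolutiveReverse Δ]
    (hΓ : IsConnectedQuiver Γ)
    (h : Γ' ⥤q Δ) (hrev : PreservesReverse h) (himm : IsImmersion h)
    (f g : Γ ⥤q Γ') (hf : PreservesReverse f) (hg : PreservesReverse g)
    (hfg : f.comp h = g.comp h)
    (v : Γ) (hv : f.obj v = g.obj v) : f = g := by
  have step : ∀ {a b : Γ} (e : a ⟶ b), f.obj a = g.obj a →
      arrowMap f ⟨a, b, e⟩ = arrowMap g ⟨a, b, e⟩ := by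
    intro a b e hab
    have H : arrowMap (f.comp h) ⟨a, b, e⟩ = arrowMap (g.comp h) ⟨a, b, e⟩ := by rw [hfg]
    exact immersion_arrow_eq h himm (f.map e) (g.map e) hab H
  have hobj : ∀ u, f.obj u = g.obj u := by
    intro u
    obtain ⟨p⟩ := hΓ v u
    induction p with
    | nil => exact hv
    | cons p e ih =>
      have h1 := step e ih
      exact congrArg (fun s => s.2.1) h1
  obtain ⟨fo, fm⟩ := f
  obtain ⟨go, gm⟩ := g
  obtain rfl : fo = go := funext hobj
  congr 1
  funext a b e
  have h1 := step e (hobj a)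
  simpa [arrowMap] using h1
end

section
/- Let Γ and Γ' be connected graphs, let B be a graph with exactly one vertex, and let π : Γ → B and π' : Γ' → B be immersions (edge-labelings of Γ and Γ' over B). Let v be a vertex of Γ and v' a vertex of Γ'. Then there exists a graph morphism f : Γ → Γ' with π' ∘ f = π and f(v) = v' (such an f is automatically an immersion, and is unique) if and only if for every path p in Γ starting at v there exists a path p' in Γ' starting at v' with π'(p') = π(p) (equal images as paths in B) and such that p' is a circuit at v' whenever p is a circuit at v. -/
/-!
Since `π'` is an immersion, a path in `Γ'` is determined by its start and its label. Send a
vertex `w` to the end of the lift at `v'` of a path from `v` to `w`. This does not depend on the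
path: for two paths `p₁ p₂` the circuit `p₁ p₂⁻¹` lifts to a circuit at `v'`, which by uniqueness
is the lift of `p₁` followed by the reverse of the lift of `p₂`. An arrow `e : u ⟶ w` goes to the
last arrow of the lift of a path to `u` followed by `e`; uniqueness of lifts of single arrows
makes this commute with reversal.
-/

open Quiver

section General

variable {U V : Type*} [Quiver U] [Quiver V]

theorem Prefunctor.length_mapPath (F : U ⥤q V) {a b : U} (p : Path a b) :
    (F.mapPath p).length = p.length := by
  induction p with
  | nil => rfl
  | cons p e ih => simp [ih]

theorem Prefunctor.mapPath_reverse [HasInvolutiveReverse U] [HasInvolutiveReverse V]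
    {F : U ⥤q V} (hF : PreservesReverse F) {a b : U} (p : Path a b) :
    F.mapPath p.reverse = (F.mapPath p).reverse := by
  induction p with
  | nil => rfl
  | cons p e ih =>
    simp only [Path.reverse, Prefunctor.mapPath_cons, Prefunctor.mapPath_comp,
      Prefunctor.mapPath_toPath, hF e, ih]

theorem IsImmersion.map_injective {F : U ⥤q V} (hF : IsImmersion F) {u x : U} :
    Function.Injective (F.map : (u ⟶ x) → (F.obj u ⟶ F.obj x)) := by
  intro e₁ e₂ h
  have : F.star u (Quiver.Star.mk e₁) = F.star u (Quiver.Star.mk e₂) := by simpa using h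
  simpa using hF u this

end General

section Subsingleton

variable {U V : Type*} [Quiver U] [Quiver V] [Subsingleton V]

theorem Quiver.reverse_heq_reverse [HasReverse V] {a b c d : V} {e : a ⟶ b} {e' : c ⟶ d}
    (h : e ≍ e') : reverse e ≍ reverse e' := by
  obtain rfl : c = a := Subsingleton.elim _ _
  obtain rfl : d = b := Subsingleton.elim _ _
  rw [eq_of_heq h]

theorem Quiver.Path.reverse_heq_reverse [HasReverse V] {a b c d : V} {p : Path a b}
    {q : Path c d} (h : p ≍ q) : p.reverse ≍ q.reverse := by
  obtain rfl : c = a := Subsingleton.elim _ _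
  obtain rfl : d = b := Subsingleton.elim _ _
  rw [eq_of_heq h]

theorem Prefunctor.ext_of_map_heq {F G : U ⥤q V}
    (h : ∀ ⦃a b : U⦄ (e : a ⟶ b), F.map e ≍ G.map e) : F = G :=
  Prefunctor.ext (fun _ => Subsingleton.elim _ _) fun _ _ e =>
    eq_of_heq ((h e).trans (by simp))

theorem IsImmersion.pathStar_eq_of_mapPath_heq {F : U ⥤q V} (hF : IsImmersion F)
    {u x₁ x₂ : U} {q₁ : Path u x₁} {q₂ : Path u x₂} (h : F.mapPath q₁ ≍ F.mapPath q₂) :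
    PathStar.mk q₁ = PathStar.mk q₂ :=
  F.pathStar_injective hF u (Sigma.ext (Subsingleton.elim _ _) h)

theorem Prefunctor.exists_eq_comp_of_mapPath_heq_comp (F : U ⥤q V) {u w : U} (c : Path u w)
    {a m b : V} {P : Path a m} {Q : Path m b} (h : F.mapPath c ≍ P.comp Q) :
    ∃ (x : U) (c₁ : Path u x) (c₂ : Path x w),
      c = c₁.comp c₂ ∧ F.mapPath c₁ ≍ P ∧ F.mapPath c₂ ≍ Q := by
  obtain rfl : a = F.obj u := Subsingleton.elim _ _
  obtain rfl : b = F.obj w := Subsingleton.elim _ _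
  have hlen : P.length ≤ c.length := by
    rw [← F.length_mapPath, eq_of_heq h, Path.length_comp]
    exact Nat.le_add_right _ _
  obtain ⟨x, c₁, c₂, rfl, hc₁⟩ := c.exists_eq_comp_of_le_length hlen
  obtain rfl : m = F.obj x := Subsingleton.elim _ _
  rw [Prefunctor.mapPath_comp] at h
  obtain ⟨h₁, h₂⟩ := (Path.comp_inj' (by rw [F.length_mapPath, hc₁])).1 (eq_of_heq h)
  exact ⟨x, c₁, c₂, rfl, heq_of_eq h₁, heq_of_eq h₂⟩

theorem Prefunctor.exists_eq_cons_of_mapPath_heq_cons (F : U ⥤q V) {u w : U} (c : Path u w)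
    {a m b : V} {P : Path a m} {E : m ⟶ b} (h : F.mapPath c ≍ P.cons E) :
    ∃ (x : U) (c₀ : Path u x) (e : x ⟶ w), c = c₀.cons e ∧ F.mapPath c₀ ≍ P ∧ F.map e ≍ E := by
  obtain rfl : a = F.obj u := Subsingleton.elim _ _
  obtain rfl : b = F.obj w := Subsingleton.elim _ _
  cases c with
  | nil => exact absurd (eq_of_heq h) (Path.nil_ne_cons _ _)
  | cons c₀ e =>
    have h := eq_of_heq h
    exact ⟨_, c₀, e, rfl, Path.heq_of_cons_eq_cons h, Path.hom_heq_of_cons_eq_cons h⟩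

end Subsingleton

section Labelings

variable {Γ Γ' B : Type*} [Quiver Γ] [Quiver Γ'] [Quiver B]

def LiftsPaths (π : Γ ⥤q B) (π' : Γ' ⥤q B) (v : Γ) (v' : Γ') : Prop :=
  ∀ (w : Γ) (p : Path v w), ∃ (w' : Γ') (p' : Path v' w'),
    π'.mapPath p' ≍ π.mapPath p ∧ (w = v → w' = v')

theorem LiftsPaths.of_comp_eq {π : Γ ⥤q B} {π' : Γ' ⥤q B} {v : Γ} {v' : Γ'} (f : Γ ⥤q Γ')
    (hf : f.comp π' = π) (hv : f.obj v = v') : LiftsPaths π π' v v' := by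
  subst hf hv
  intro w p
  exact ⟨f.obj w, f.mapPath p, heq_of_eq (f.mapPath_comp_apply π' p).symm, fun h => h ▸ rfl⟩

variable [HasInvolutiveReverse Γ] [HasInvolutiveReverse Γ'] [HasInvolutiveReverse B]
  [Subsingleton B] {π : Γ ⥤q B} {π' : Γ' ⥤q B} {v : Γ} {v' : Γ'}

theorem LiftsPaths.target_eq (H : LiftsPaths π π' v v') (hπrev : PreservesReverse π)
    (hπ'rev : PreservesReverse π') (hπ' : IsImmersion π') {w : Γ} (p₁ p₂ : Path v w)
    {x₁ x₂ : Γ'} {q₁ : Path v' x₁} {q₂ : Path v' x₂} (h₁ : π'.mapPath q₁ ≍ π.mapPath p₁)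
    (h₂ : π'.mapPath q₂ ≍ π.mapPath p₂) : x₁ = x₂ := by
  obtain ⟨y, c, hc, hcirc⟩ := H v (p₁.comp p₂.reverse)
  obtain rfl := hcirc rfl
  rw [Prefunctor.mapPath_comp, Prefunctor.mapPath_reverse hπrev] at hc
  obtain ⟨m, a, d, rfl, ha, hd⟩ := π'.exists_eq_comp_of_mapPath_heq_comp c hc
  have hd' : π'.mapPath d.reverse ≍ π'.mapPath q₂ := by
    rw [Prefunctor.mapPath_reverse hπ'rev]
    refine (Path.reverse_heq_reverse hd).trans ?_
    rw [Path.reverse_reverse]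
    exact h₂.symm
  calc x₁ = m := congrArg Sigma.fst (hπ'.pathStar_eq_of_mapPath_heq (h₁.trans ha.symm))
    _ = x₂ := congrArg Sigma.fst (hπ'.pathStar_eq_of_mapPath_heq hd')

theorem LiftsPaths.exists_morphism (H : LiftsPaths π π' v v') (hΓ : IsConnectedQuiver Γ)
    (hπrev : PreservesReverse π) (hπ'rev : PreservesReverse π') (hπ' : IsImmersion π') :
    ∃ f : Γ ⥤q Γ', PreservesReverse f ∧ f.comp π' = π ∧ f.obj v = v' := by
  have path (w : Γ) : Path v w := (hΓ v w).some
  choose fobj lift hlift hcirc using fun w => H w (path w)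
  have target_eq {w : Γ} (p : Path v w) {x : Γ'} (q : Path v' x)
      (h : π'.mapPath q ≍ π.mapPath p) : x = fobj w :=
    H.target_eq hπrev hπ'rev hπ' p (path w) h (hlift w)
  have lift_arrow {u w : Γ} (e : u ⟶ w) : ∃ e' : fobj u ⟶ fobj w, π'.map e' ≍ π.map e := by
    obtain ⟨x, r, hr, -⟩ := H w ((path u).cons e)
    obtain ⟨y, r₀, e', rfl, hr₀, he'⟩ := π'.exists_eq_cons_of_mapPath_heq_cons r hr
    obtain rfl := target_eq _ r₀ hr₀
    obtain rfl := target_eq _ _ hr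
    exact ⟨e', he'⟩
  choose fmap hfmap using @lift_arrow
  refine ⟨⟨fobj, fmap⟩, fun a b e => hπ'.map_injective (eq_of_heq ?_),
    Prefunctor.ext_of_map_heq fun _ _ e => hfmap e, hcirc v rfl⟩
  exact (hfmap _).trans <| (heq_of_eq (hπrev e)).trans <|
    (reverse_heq_reverse (hfmap e).symm).trans (heq_of_eq (hπ'rev _).symm)

end Labelings

theorem exists_morphism_iff_paths_lift_general {Γ Γ' B : Type*}
    [Quiver Γ] [Quiver Γ'] [Quiver B]
    [HasInvolutiveReverse Γ] [HasInvolutiveReverse Γ'] [HasInvolutiveReverse B]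
    (hΓ : IsConnectedQuiver Γ)
    (hB : ∃ b : B, ∀ x : B, x = b)
    (π : Γ ⥤q B) (hπrev : PreservesReverse π)
    (π' : Γ' ⥤q B) (hπ'rev : PreservesReverse π') (hπ' : IsImmersion π')
    (v : Γ) (v' : Γ') :
    (∃ f : Γ ⥤q Γ', PreservesReverse f ∧ f.comp π' = π ∧ f.obj v = v') ↔
      (∀ (w : Γ) (p : Path v w), ∃ (w' : Γ') (p' : Path v' w'),
        HEq (π'.mapPath p') (π.mapPath p) ∧ (w = v → w' = v')) := by
  obtain ⟨b, hb⟩ := hB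
  have : Subsingleton B := ⟨fun x y => (hb x).trans (hb y).symm⟩
  constructor
  · rintro ⟨f, -, hf, hv⟩
    exact LiftsPaths.of_comp_eq f hf hv
  · intro H
    exact LiftsPaths.exists_morphism H hΓ hπrev hπ'rev hπ'

/-- Let `Γ`, `Γ'` be connected graphs edge-labeled over a one-vertex graph `B` via
immersions `π`, `π'`. There is a (label-preserving) graph morphism `f : Γ → Γ'` with
`π' ∘ f = π` sending `v` to `v'` iff every path `p` in `Γ` starting at `v` has a
companion path `p'` in `Γ'` starting at `v'` with the same label, which is a circuit
whenever `p` is a circuit. -/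
theorem exists_morphism_iff_paths_lift {Γ Γ' B : Type*}
    [Quiver Γ] [Quiver Γ'] [Quiver B]
    [HasInvolutiveReverse Γ] [HasInvolutiveReverse Γ'] [HasInvolutiveReverse B]
    (hΓ : IsConnectedQuiver Γ) (hΓ' : IsConnectedQuiver Γ')
    (hB : ∃ b : B, ∀ x : B, x = b)
    (π : Γ ⥤q B) (hπrev : PreservesReverse π) (hπ : IsImmersion π)
    (π' : Γ' ⥤q B) (hπ'rev : PreservesReverse π') (hπ' : IsImmersion π')
    (v : Γ) (v' : Γ') :
    (∃ f : Γ ⥤q Γ', PreservesReverse f ∧ f.comp π' = π ∧ f.obj v = v') ↔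
      (∀ (w : Γ) (p : Path v w), ∃ (w' : Γ') (p' : Path v' w'),
        HEq (π'.mapPath p') (π.mapPath p) ∧ (w = v → w' = v')) :=
  exists_morphism_iff_paths_lift_general hΓ hB π hπrev π' hπ'rev hπ' v v'
end

section
/- Let Γ and Γ' be connected graphs, let B be a graph with exactly one vertex, and let π : Γ → B and π' : Γ' → B be immersions (edge-labelings). Let v be a vertex of Γ and v' a vertex of Γ'. Then there exists an isomorphism of graphs f : Γ → Γ' with π' ∘ f = π and f(v) = v' if and only if there exists a bijection p ↔ p' between the set of paths in Γ starting at v and the set of paths in Γ' starting at v' such that π(p) = π'(p') for all corresponding pairs and such that p is a circuit at v if and only if p' is a circuit at v'. -/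
open Quiver

/-! An immersion into a one-vertex graph lifts every label to at most one path from a given
vertex, so a label-preserving `Φ` sends a path from `v` to the unique path from `v'` with the
same label. The endpoint of `Φ p` depends only on the endpoint `w` of `p`: for `p, q` ending
at `w`, the circuit `p q⁻¹` is sent to a circuit at `v'`, which splits into the lifts of the
labels of `p` and `q⁻¹`, so the lifts of `p` and `q` end at the same vertex. Sending `w` to that
vertex and each arrow to the lift of its label gives a morphism `f` over `B`; the same
construction for `Φ⁻¹` is inverse to `f`. Conversely an isomorphism over `B` is bijective on
stars, hence on paths from `v`. -/

theorem Quiver.Path.heq_reverse {V : Type*} [Quiver V] [HasReverse V] [Subsingleton V]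
    {a b a' b' : V} {p : Path a b} {q : Path a' b'} (h : HEq p q) :
    HEq p.reverse q.reverse := by
  obtain rfl := Subsingleton.elim a a'
  obtain rfl := Subsingleton.elim b b'
  rw [eq_of_heq h]

namespace Prefunctor

variable {U V : Type*} [Quiver U] [Quiver V]

@[simp]
theorem length_mapPath_s9 (F : U ⥤q V) {a b : U} (p : Path a b) :
    (F.mapPath p).length = p.length := by
  induction p with
  | nil => rfl
  | cons p e ih => simp [ih]

theorem mapPath_reverse_s9 [HasInvolutiveReverse U] [HasInvolutiveReverse V] {F : U ⥤q V}
    (hF : PreservesReverse F) {a b : U} (p : Path a b) :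
    F.mapPath p.reverse = (F.mapPath p).reverse := by
  induction p with
  | nil => rfl
  | cons p e ih => simp [Path.reverse, ih, hF e]

theorem ext_of_subsingleton [Subsingleton V] {F G : U ⥤q V}
    (h : ∀ ⦃a b : U⦄ (e : a ⟶ b), HEq (F.map e) (G.map e)) : F = G := by
  obtain ⟨Fobj, Fmap⟩ := F
  obtain ⟨Gobj, Gmap⟩ := G
  obtain rfl : Fobj = Gobj := funext fun _ => Subsingleton.elim _ _
  congr
  funext a b e
  exact eq_of_heq (h e)

theorem exists_eq_cons_of_heq_mapPath_cons [Subsingleton V] (F : U ⥤q V) {u c : U}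
    {s : Path u c} {x y z : V} {L : Path x y} {ℓ : y ⟶ z} (h : HEq (F.mapPath s) (L.cons ℓ)) :
    ∃ (m : U) (s₀ : Path u m) (ε : m ⟶ c),
      s = s₀.cons ε ∧ HEq (F.mapPath s₀) L ∧ HEq (F.map ε) ℓ := by
  obtain rfl := Subsingleton.elim x (F.obj u)
  obtain rfl := Subsingleton.elim z (F.obj c)
  cases s with
  | nil => exact absurd (eq_of_heq h) (Path.nil_ne_cons _ _)
  | @cons m _ s₀ ε =>
    obtain rfl := Subsingleton.elim y (F.obj m)
    obtain ⟨-, h₀, hε⟩ := Path.cons.inj (eq_of_heq h)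
    exact ⟨m, s₀, ε, rfl, h₀, hε⟩

theorem exists_eq_comp_of_heq_mapPath_comp [Subsingleton V] (F : U ⥤q V) {u c : U}
    {s : Path u c} {x y z : V} {L₁ : Path x y} {L₂ : Path y z}
    (h : HEq (F.mapPath s) (L₁.comp L₂)) :
    ∃ (m : U) (s₁ : Path u m) (s₂ : Path m c),
      s = s₁.comp s₂ ∧ HEq (F.mapPath s₁) L₁ ∧ HEq (F.mapPath s₂) L₂ := by
  obtain rfl := Subsingleton.elim x (F.obj u)
  obtain rfl := Subsingleton.elim z (F.obj c)
  replace h := eq_of_heq h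
  have hle : L₁.length ≤ s.length := by
    have := congrArg Path.length h
    simp only [length_mapPath_s9, Path.length_comp] at this
    omega
  obtain ⟨m, s₁, s₂, rfl, hlen⟩ := s.exists_eq_comp_of_le_length hle
  obtain rfl := Subsingleton.elim y (F.obj m)
  rw [mapPath_comp, Path.comp_inj' (by simpa using hlen)] at h
  exact ⟨m, s₁, s₂, rfl, heq_of_eq h.1, heq_of_eq h.2⟩

theorem bijective_star_of_bijective_arrowMap {F : U ⥤q V} (hobj : Function.Injective F.obj)
    (harr : Function.Bijective (arrowMap F)) (u : U) : Function.Bijective (F.star u) := by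
  refine ⟨fun e e' h => ?_, fun ⟨w', e'⟩ => ?_⟩
  · exact eq_of_heq (Sigma.mk.inj (harr.1 (congrArg (Sigma.mk (F.obj u)) h))).2
  · obtain ⟨⟨a, c, e⟩, h⟩ := harr.2 ⟨F.obj u, w', e'⟩
    obtain rfl : a = u := hobj (congrArg Sigma.fst h)
    exact ⟨⟨c, e⟩, eq_of_heq (Sigma.mk.inj h).2⟩

end Prefunctor

namespace IsImmersion

variable {U V W : Type*} [Quiver U] [Quiver V] [Quiver W] {π : U ⥤q V}

theorem map_injective_s9 (hπ : IsImmersion π) {a b : U} :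
    Function.Injective (π.map : (a ⟶ b) → (π.obj a ⟶ π.obj b)) := fun _ _ h =>
  eq_of_heq (Sigma.mk.inj (hπ a (congrArg (Sigma.mk (π.obj b)) h))).2

theorem pathStar_eq_of_heq [Subsingleton V] (hπ : IsImmersion π) {u w w' : U}
    {p : Path u w} {q : Path u w'} (h : HEq (π.mapPath p) (π.mapPath q)) :
    (⟨w, p⟩ : PathStar u) = ⟨w', q⟩ :=
  π.pathStar_injective hπ u (Sigma.ext (Subsingleton.elim _ _) h)

theorem eq_of_arrowMap_eq (hπ : IsImmersion π) {x y : Σ a b : U, a ⟶ b} (h₁ : x.1 = y.1)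
    (h : arrowMap π x = arrowMap π y) : x = y := by
  obtain ⟨a, b, e⟩ := x
  obtain ⟨a', b', e'⟩ := y
  obtain rfl : a = a' := h₁
  exact congrArg (Sigma.mk a) (hπ a (eq_of_heq (Sigma.mk.inj h).2))

theorem preservesReverse_of_comp [HasInvolutiveReverse U] [HasInvolutiveReverse V]
    [HasInvolutiveReverse W] (hπ : IsImmersion π) (hπrev : PreservesReverse π) {F : W ⥤q U}
    (hF : PreservesReverse (F ⋙q π)) : PreservesReverse F :=
  fun _ _ e => hπ.map_injective_s9 ((hF e).trans (hπrev _).symm)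

theorem leftInverse_arrowMap {π' : W ⥤q V} (hπ : IsImmersion π) {F : U ⥤q W} {G : W ⥤q U}
    (hF : F ⋙q π' = π) (hG : G ⋙q π = π') (hGF : Function.LeftInverse G.obj F.obj) :
    Function.LeftInverse (arrowMap G) (arrowMap F) := fun x =>
  hπ.eq_of_arrowMap_eq (hGF x.1) <| by
    change arrowMap ((F ⋙q G) ⋙q π) x = arrowMap π x
    rw [Prefunctor.comp_assoc, hG, hF]

end IsImmersion

def PreservesLabels {Γ Γ' B : Type*} [Quiver Γ] [Quiver Γ'] [Quiver B] (π : Γ ⥤q B)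
    (π' : Γ' ⥤q B) {v : Γ} {v' : Γ'} (Φ : PathStar v → PathStar v') : Prop :=
  ∀ x, HEq (π'.mapPath (Φ x).2) (π.mapPath x.2)

namespace PreservesLabels

variable {Γ Γ' B : Type*} [Quiver Γ] [Quiver Γ'] [Quiver B] [Subsingleton B]
  {π : Γ ⥤q B} {π' : Γ' ⥤q B} {v : Γ} {v' : Γ'} {Φ : PathStar v → PathStar v'}

theorem exists_hom (hΦ : PreservesLabels π π' Φ) (hπ' : IsImmersion π') {a c : Γ}
    (p : Path v a) (e : a ⟶ c) :
    ∃ ε : (Φ ⟨a, p⟩).1 ⟶ (Φ ⟨c, p.cons e⟩).1, HEq (π'.map ε) (π.map e) := by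
  have h := hΦ ⟨c, p.cons e⟩
  generalize Φ ⟨c, p.cons e⟩ = y at h ⊢
  obtain ⟨c', s⟩ := y
  dsimp only at h ⊢
  obtain ⟨m, s₀, ε, rfl, hs₀, hε⟩ := π'.exists_eq_cons_of_heq_mapPath_cons h
  rw [← congrArg Sigma.fst (hπ'.pathStar_eq_of_heq (hs₀.trans (hΦ ⟨a, p⟩).symm))]
  exact ⟨ε, hε⟩

variable [HasInvolutiveReverse Γ] [HasInvolutiveReverse Γ'] [HasInvolutiveReverse B]

theorem fst_apply_eq (hΦ : PreservesLabels π π' Φ) (hπ' : IsImmersion π')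
    (hπrev : PreservesReverse π) (hπ'rev : PreservesReverse π')
    (hcirc : ∀ x : PathStar v, x.1 = v → (Φ x).1 = v') {w : Γ} (p q : Path v w) :
    (Φ ⟨w, p⟩).1 = (Φ ⟨w, q⟩).1 := by
  have h := hΦ ⟨v, p.comp q.reverse⟩
  have hv' := hcirc ⟨v, p.comp q.reverse⟩ rfl
  generalize Φ ⟨v, p.comp q.reverse⟩ = y at h hv'
  obtain ⟨z, r⟩ := y
  obtain rfl : z = v' := hv'
  rw [Prefunctor.mapPath_comp, Prefunctor.mapPath_reverse_s9 hπrev] at h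
  obtain ⟨m, r₁, r₂, -, h₁, h₂⟩ := π'.exists_eq_comp_of_heq_mapPath_comp h
  have h₂' : HEq (π'.mapPath r₂.reverse) (π.mapPath q) := by
    simpa [Prefunctor.mapPath_reverse_s9 hπ'rev] using Path.heq_reverse h₂
  calc (Φ ⟨w, p⟩).1 = m :=
      congrArg Sigma.fst (hπ'.pathStar_eq_of_heq ((hΦ ⟨w, p⟩).trans h₁.symm))
    _ = (Φ ⟨w, q⟩).1 :=
      congrArg Sigma.fst (hπ'.pathStar_eq_of_heq (h₂'.trans (hΦ ⟨w, q⟩).symm))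

theorem exists_prefunctor (hΦ : PreservesLabels π π' Φ) (hΓ : IsConnectedQuiver Γ)
    (hπ' : IsImmersion π') (hπrev : PreservesReverse π) (hπ'rev : PreservesReverse π')
    (hcirc : ∀ x : PathStar v, x.1 = v → (Φ x).1 = v') :
    ∃ F : Γ ⥤q Γ', F ⋙q π' = π ∧ ∀ x, F.obj x.1 = (Φ x).1 := by
  let P (w : Γ) : Path v w := (hΓ v w).some
  have hobj (x : PathStar v) : (Φ ⟨x.1, P x.1⟩).1 = (Φ x).1 :=
    hΦ.fst_apply_eq hπ' hπrev hπ'rev hcirc _ _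
  have hmap {a c : Γ} (e : a ⟶ c) :
      ∃ ε : (Φ ⟨a, P a⟩).1 ⟶ (Φ ⟨c, P c⟩).1, HEq (π'.map ε) (π.map e) := by
    rw [hobj ⟨c, (P a).cons e⟩]
    exact hΦ.exists_hom hπ' (P a) e
  choose map hmap using @hmap
  exact ⟨⟨fun w => (Φ ⟨w, P w⟩).1, map⟩,
    Prefunctor.ext_of_subsingleton fun _ _ e => hmap e, hobj⟩

end PreservesLabels

/-- Let `Γ`, `Γ'` be connected graphs edge-labeled over a one-vertex graph `B` via
immersions `π`, `π'`, with basepoints `v`, `v'`. There is an isomorphism of graphs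
`f : Γ → Γ'` (bijective on vertices and on arrows) with `π' ∘ f = π` and `f v = v'`
iff there is a label-preserving bijection between paths in `Γ` starting at `v` and
paths in `Γ'` starting at `v'` carrying circuits to circuits and conversely. -/
theorem exists_iso_iff_path_bijection {Γ Γ' B : Type*}
    [Quiver Γ] [Quiver Γ'] [Quiver B]
    [HasInvolutiveReverse Γ] [HasInvolutiveReverse Γ'] [HasInvolutiveReverse B]
    (hΓ : IsConnectedQuiver Γ) (hΓ' : IsConnectedQuiver Γ')
    (hB : ∃ b : B, ∀ x : B, x = b)
    (π : Γ ⥤q B) (hπrev : PreservesReverse π) (hπ : IsImmersion π)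
    (π' : Γ' ⥤q B) (hπ'rev : PreservesReverse π') (hπ' : IsImmersion π')
    (v : Γ) (v' : Γ') :
    (∃ f : Γ ⥤q Γ', PreservesReverse f ∧ Function.Bijective f.obj ∧
        Function.Bijective (arrowMap f) ∧ f.comp π' = π ∧ f.obj v = v') ↔
      (∃ Φ : (Σ w : Γ, Path v w) ≃ (Σ w' : Γ', Path v' w'),
        ∀ x : Σ w : Γ, Path v w,
          HEq (π'.mapPath (Φ x).2) (π.mapPath x.2) ∧ (x.1 = v ↔ (Φ x).1 = v')) := by
  obtain ⟨b, hb⟩ := hB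
  have : Subsingleton B := ⟨fun x y => (hb x).trans (hb y).symm⟩
  constructor
  · rintro ⟨f, -, hobj, harr, rfl, rfl⟩
    have hstar := f.bijective_star_of_bijective_arrowMap hobj.1 harr
    exact ⟨.ofBijective _ (f.pathStar_bijective hstar v), fun x =>
      ⟨heq_of_eq (f.mapPath_comp_apply π' x.2).symm, hobj.1.eq_iff.symm⟩⟩
  · rintro ⟨Φ, hΦ⟩
    have hΦsymm (y : PathStar v') :
        HEq (π.mapPath (Φ.symm y).2) (π'.mapPath y.2) ∧ (y.1 = v' → (Φ.symm y).1 = v) := by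
      have h := hΦ (Φ.symm y)
      rw [Φ.apply_symm_apply] at h
      exact ⟨h.1.symm, h.2.2⟩
    obtain ⟨F, hF, hFΦ⟩ := PreservesLabels.exists_prefunctor (fun x => (hΦ x).1) hΓ hπ'
      hπrev hπ'rev fun x => (hΦ x).2.1
    obtain ⟨G, hG, hGΦ⟩ := PreservesLabels.exists_prefunctor (fun y => (hΦsymm y).1) hΓ' hπ
      hπ'rev hπrev fun y => (hΦsymm y).2
    have hGF : Function.LeftInverse G.obj F.obj := fun w => by
      obtain ⟨p⟩ := hΓ v w
      rw [hFΦ ⟨w, p⟩, hGΦ, Φ.symm_apply_apply]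
    have hFG : Function.LeftInverse F.obj G.obj := fun w' => by
      obtain ⟨p'⟩ := hΓ' v' w'
      rw [hGΦ ⟨w', p'⟩, hFΦ, Φ.apply_symm_apply]
    refine ⟨F, hπ'.preservesReverse_of_comp hπ'rev (hF ▸ hπrev),
      ⟨hGF.injective, hFG.surjective⟩, ⟨(hπ.leftInverse_arrowMap hF hG hGF).injective,
        (hπ'.leftInverse_arrowMap hG hF hFG).surjective⟩, hF, ?_⟩
    rw [hFΦ ⟨v, .nil⟩]
    exact (hΦ _).2.1 rfl
end

section
/- Let f : Γ̃ → Γ be an immersion between connected graphs. Then f is a covering if and only if for every vertex v of Γ, every vertex ṽ of Γ̃ with f(ṽ) = v, and every path p in Γ starting at v, there exists a path p̃ in Γ̃ starting at ṽ with f(p̃) = p (such a lift is automatically unique). -/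
open Quiver

/-- Reversal gives an equivalence between the star and the costar at a vertex. -/
def myStarCostar {U : Type*} [Quiver U] [HasInvolutiveReverse U] (u : U) :
    Quiver.Star u ≃ Quiver.Costar u where
  toFun e := ⟨e.1, reverse e.2⟩
  invFun e := ⟨e.1, reverse e.2⟩
  left_inv := by rintro ⟨w, e⟩; simp
  right_inv := by rintro ⟨w, e⟩; simp

theorem costar_eq_of_preservesReverse {U V : Type*} [Quiver U] [Quiver V]
    [HasInvolutiveReverse U] [HasInvolutiveReverse V] (f : U ⥤q V)
    (hrev : PreservesReverse f) (u : U) :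
    f.costar u = (myStarCostar (f.obj u)) ∘ (f.star u) ∘ (myStarCostar u).symm := by
  funext x
  obtain ⟨w, e⟩ := x
  simp only [Function.comp_apply, myStarCostar, Equiv.coe_fn_symm_mk, Equiv.coe_fn_mk,
    Prefunctor.star_apply, Prefunctor.costar_apply]
  rw [hrev e, reverse_reverse]

/-- An immersion `f : Γ̃ → Γ` between connected graphs is a covering iff every path in
`Γ` starting at the image of a vertex `ṽ` of `Γ̃` lifts to a path in `Γ̃` starting at
`ṽ` (i.e. `f.pathStar ṽ` is surjective for every `ṽ`; such lifts are automatically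
unique). -/
theorem isCovering_iff_paths_lift {Γt Γ : Type*}
    [Quiver Γt] [Quiver Γ] [HasInvolutiveReverse Γt] [HasInvolutiveReverse Γ]
    (f : Γt ⥤q Γ) (hrev : PreservesReverse f) (himm : IsImmersion f)
    (hΓt : IsConnectedQuiver Γt) (hΓ : IsConnectedQuiver Γ) :
    f.IsCovering ↔ ∀ vt : Γt, Function.Surjective (f.pathStar vt) := by
  constructor
  · exact fun h vt => (h.pathStar_bijective vt).2
  · intro hsurj
    have hstar : ∀ u : Γt, Function.Bijective (f.star u) := by
      intro u
      refine ⟨himm u, ?_⟩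
      rintro ⟨w, e⟩
      obtain ⟨⟨wt, p⟩, hp⟩ := hsurj u ⟨w, e.toPath⟩
      cases p with
      | nil =>
        exfalso
        have := congrArg (fun x : Quiver.PathStar (f.obj u) => x.2.length) hp
        simp [Prefunctor.pathStar, Hom.toPath] at this
      | cons q a =>
        cases q with
        | cons q' a' =>
          exfalso
          have := congrArg (fun x : Quiver.PathStar (f.obj u) => x.2.length) hp
          simp [Prefunctor.pathStar, Hom.toPath] at this
        | nil =>
          simp only [Prefunctor.pathStar, Quiver.PathStar.mk, Prefunctor.mapPath_cons,
            Prefunctor.mapPath_nil] at hp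
          obtain ⟨h1, h2⟩ := Sigma.mk.inj_iff.mp hp
          subst h1
          have h2' := eq_of_heq h2
          refine ⟨⟨wt, a⟩, ?_⟩
          have : f.map a = e := by
            injection h2'
          simp [Prefunctor.star_apply, this]
    refine ⟨hstar, ?_⟩
    intro u
    rw [costar_eq_of_preservesReverse f hrev u]
    exact ((Equiv.bijective _).comp (hstar u)).comp (Equiv.bijective _)
end

section
/- Let f : Γ̃ → Γ be an immersion of graphs, let ṽ be a vertex of Γ̃ with f(ṽ) = v, and let p be a path in Γ starting at v. Then there is a unique (possibly empty) maximal initial segment p₁ of p that lifts to a path at ṽ; that is, there exist a decomposition p = p₁ followed by p₂ and a path p̃₁ in Γ̃ starting at ṽ with f(p̃₁) = p₁, such that every initial segment q of p which lifts to a path at ṽ is an initial segment of p₁; moreover the lift p̃₁ of p₁ at ṽ is unique. -/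
open Quiver

/-- `q` is an initial segment of `p` if `p = q.comp r` for some path `r`. -/
def IsInitialSeg {U : Type*} [Quiver U] {u a c : U}
    (q : Path u a) (p : Path u c) : Prop :=
  ∃ r : Path a c, p = q.comp r

/-- A path `q` in `Γ` starting at `f.obj ṽ` lifts at `ṽ` if it is in the image of the
induced map on paths starting at `ṽ`. -/
def LiftsAt {Γt Γ : Type*} [Quiver Γt] [Quiver Γ] (f : Γt ⥤q Γ) (vt : Γt)
    (s : Quiver.PathStar (f.obj vt)) : Prop :=
  ∃ x : Quiver.PathStar vt, f.pathStar vt x = s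

lemma seg_antisymm {U : Type*} [Quiver U] {u a c : U} {q : Path u a} {p : Path u c}
    (h1 : IsInitialSeg q p) (h2 : IsInitialSeg p q) :
    (⟨a, q⟩ : Quiver.PathStar u) = ⟨c, p⟩ := by
  obtain ⟨r, rfl⟩ := h1
  cases r with
  | nil => rfl
  | cons r' e =>
    exfalso
    obtain ⟨r2, hr2⟩ := h2
    have := congrArg Path.length hr2
    simp [Path.length_comp] at this
    omega

lemma exists_max_seg {Γt Γ : Type*}
    [Quiver Γt] [Quiver Γ]
    (f : Γt ⥤q Γ)
    (vt : Γt) {w : Γ} (p : Path (f.obj vt) w) :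
    ∃ s : Quiver.PathStar (f.obj vt),
      IsInitialSeg s.2 p ∧ LiftsAt f vt s ∧
        (∀ t : Quiver.PathStar (f.obj vt),
          IsInitialSeg t.2 p → LiftsAt f vt t → IsInitialSeg t.2 s.2) := by
  induction p with
  | nil =>
    refine ⟨⟨f.obj vt, Path.nil⟩, ⟨Path.nil, rfl⟩, ⟨⟨vt, Path.nil⟩, rfl⟩, ?_⟩
    exact fun t ht _ => ht
  | @cons b w p' e ih =>
    by_cases hful : LiftsAt f vt ⟨w, p'.cons e⟩
    · refine ⟨⟨w, p'.cons e⟩, ⟨Path.nil, (Path.comp_nil _).symm⟩, hful, ?_⟩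
      exact fun t ht _ => ht
    · obtain ⟨s, ⟨r, hr⟩, hl, hmax⟩ := ih
      refine ⟨s, ⟨r.cons e, by rw [hr]; rfl⟩, hl, ?_⟩
      rintro ⟨tw, tp⟩ ⟨r2, hr2⟩ htl
      cases r2 with
      | nil =>
        rw [Path.comp_nil] at hr2
        exact absurd (hr2 ▸ htl) hful
      | cons r2' e' =>
        rw [Path.comp_cons] at hr2
        have hobj := Path.obj_eq_of_cons_eq_cons hr2
        subst hobj
        have hheq := Path.heq_of_cons_eq_cons hr2
        exact hmax ⟨tw, tp⟩ ⟨r2', eq_of_heq hheq⟩ htl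

/-- Let `f : Γ̃ → Γ` be an immersion of graphs, `ṽ` a vertex of `Γ̃` and `p` a path in
`Γ` starting at `f(ṽ)`. There is a unique maximal (possibly empty) initial segment of
`p` lifting to a path at `ṽ`: an initial segment `s` of `p` which lifts at `ṽ`, such
that every initial segment of `p` lifting at `ṽ` is an initial segment of `s`; moreover
the lift of `s` at `ṽ` is unique. -/
theorem exists_unique_maximal_liftable_initial_segment {Γt Γ : Type*}
    [Quiver Γt] [Quiver Γ] [HasInvolutiveReverse Γt] [HasInvolutiveReverse Γ]
    (f : Γt ⥤q Γ) (hrev : PreservesReverse f) (himm : IsImmersion f)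
    (vt : Γt) {w : Γ} (p : Path (f.obj vt) w) :
    ∃! s : Quiver.PathStar (f.obj vt),
      IsInitialSeg s.2 p ∧ LiftsAt f vt s ∧
        (∀ t : Quiver.PathStar (f.obj vt),
          IsInitialSeg t.2 p → LiftsAt f vt t → IsInitialSeg t.2 s.2) ∧
        (∀ x y : Quiver.PathStar vt,
          f.pathStar vt x = s → f.pathStar vt y = s → x = y) := by
  
  obtain ⟨s, hseg, hl, hmax⟩ := exists_max_seg f vt p
  have hinj := f.pathStar_injective himm vt
  refine ⟨s, ⟨hseg, hl, hmax, fun x y hx hy => hinj (hx.trans hy.symm)⟩, ?_⟩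
  rintro ⟨tw, tp⟩ ⟨htseg, htl, htmax, -⟩
  exact seg_antisymm (hmax ⟨tw, tp⟩ htseg htl) (htmax s hseg hl)
end

section
/- Let f : Γ̃ → Γ be an immersion of connected graphs and let γ be a deck transformation of f. If γ fixes some vertex of Γ̃ (γ(ṽ) = ṽ for some vertex ṽ), or if γ fixes some arrow of Γ̃, then γ is the identity automorphism of Γ̃. Consequently, a non-identity deck transformation of f moves every vertex and every arrow of Γ̃. -/
open Quiver

/-- `γ` is a deck transformation of the morphism `f : Γ̃ → Γ`: a graph automorphism
of `Γ̃` (a reverse-preserving morphism bijective on vertices and on arrows)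
with `f ∘ γ = f`. -/
structure IsDeckTrans {Γt Γ : Type*} [Quiver Γt] [Quiver Γ]
    [HasInvolutiveReverse Γt] (f : Γt ⥤q Γ) (γ : Γt ⥤q Γt) : Prop where
  rev : ∀ ⦃a b : Γt⦄ (e : a ⟶ b), γ.map (reverse e) = reverse (γ.map e)
  bijV : Function.Bijective γ.obj
  bijA : Function.Bijective (arrowMap γ)
  comp_eq : γ.comp f = f

/-- A deck transformation of an immersion of connected graphs which fixes some vertex,
or fixes some arrow, is the identity automorphism. Consequently a non-identity deck
transformation moves every vertex and every arrow. -/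
theorem deckTrans_eq_id_of_fixed_point {Γt Γ : Type*}
    [Quiver Γt] [Quiver Γ] [HasInvolutiveReverse Γt] [HasInvolutiveReverse Γ]
    (f : Γt ⥤q Γ) (hrev : PreservesReverse f) (himm : IsImmersion f)
    (hΓt : IsConnectedQuiver Γt) (hΓ : IsConnectedQuiver Γ)
    (γ : Γt ⥤q Γt) (hγ : IsDeckTrans f γ) :
    ((∃ vt : Γt, γ.obj vt = vt) ∨ (∃ a : Σ u w : Γt, u ⟶ w, arrowMap γ a = a)) →
      γ = Prefunctor.id Γt := by
  intro hfix
  -- Injectivity of `arrowMap f` on arrows with the same source.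
  have hinj : ∀ (s t : Σ u w : Γt, u ⟶ w), s.1 = t.1 →
      arrowMap f s = arrowMap f t → s = t := by
    rintro ⟨u, w, e⟩ ⟨u', w', e'⟩ h he
    dsimp at h
    subst h
    have h1 : f.star u ⟨w, e⟩ = f.star u ⟨w', e'⟩ :=
      eq_of_heq (Sigma.mk.inj_iff.mp he).2
    have h3 := himm u h1
    have h4 : w = w' := congrArg Sigma.fst h3
    subst h4
    have h5 : e = e' := eq_of_heq (Sigma.mk.inj_iff.mp h3).2
    subst h5
    rfl
  -- `f ∘ γ = f` at the level of arrows.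
  have hcomp : ∀ a : Σ u w : Γt, u ⟶ w, arrowMap f (arrowMap γ a) = arrowMap f a := by
    intro a
    have : arrowMap (γ.comp f) = arrowMap f := by rw [hγ.comp_eq]
    calc arrowMap f (arrowMap γ a) = arrowMap (γ.comp f) a := rfl
      _ = arrowMap f a := by rw [this]
  -- Key propagation: a fixed source vertex fixes every arrow out of it.
  have key : ∀ {u : Γt}, γ.obj u = u → ∀ {w : Γt} (e : u ⟶ w),
      arrowMap γ (⟨u, w, e⟩ : Σ u w : Γt, u ⟶ w) = ⟨u, w, e⟩ := by
    intro u hu w e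
    exact hinj (arrowMap γ ⟨u, w, e⟩) ⟨u, w, e⟩ hu (hcomp ⟨u, w, e⟩)
  -- Fixed vertices propagate along arrows.
  have step : ∀ {u : Γt}, γ.obj u = u → ∀ {w : Γt}, (u ⟶ w) → γ.obj w = w := by
    intro u hu w e
    exact congrArg (fun s : Σ u w : Γt, u ⟶ w => s.2.1) (key hu e)
  -- There is a fixed vertex.
  have ⟨v0, hv0⟩ : ∃ v : Γt, γ.obj v = v := by
    rcases hfix with ⟨v, hv⟩ | ⟨a, ha⟩
    · exact ⟨v, hv⟩
    · exact ⟨a.1, congrArg (fun s : Σ u w : Γt, u ⟶ w => s.1) ha⟩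
  -- All vertices are fixed, by connectedness.
  have hobj : ∀ u : Γt, γ.obj u = u := by
    intro u
    obtain ⟨p⟩ := hΓt v0 u
    induction p with
    | nil => exact hv0
    | cons q e ih => exact step ih e
  -- All arrows are fixed.
  have hmap : ∀ {u w : Γt} (e : u ⟶ w),
      arrowMap γ (⟨u, w, e⟩ : Σ u w : Γt, u ⟶ w) = ⟨u, w, e⟩ :=
    fun {u w} e => key (hobj u) e
  clear hfix hv0 hcomp hinj key step hγ hrev himm hΓt hΓ
  obtain ⟨o, m⟩ := γ
  have ho : o = id := funext hobj
  subst ho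
  have hm : ∀ {u w : Γt} (e : u ⟶ w), m e = e := by
    intro u w e
    have h := hmap e
    have h2 := (Sigma.mk.inj_iff.mp h).2
    have h3 : (⟨id w, m e⟩ : Σ b : Γt, u ⟶ b) = ⟨w, e⟩ := eq_of_heq h2
    exact eq_of_heq (Sigma.mk.inj_iff.mp h3).2
  have hm' : @m = fun (u w : Γt) (e : u ⟶ w) => (e : id u ⟶ id w) := by
    funext u w e
    exact hm e
  subst hm'
  rfl
end

section
/- Let f : Γ̃ → Γ be an immersion of connected graphs and let G be its group of deck transformations, acting on Γ̃. Then the quotient map q : Γ̃ → Γ̃/G is a normal covering, and G is the group of deck transformations of q: every element of G is a deck transformation of q, and every deck transformation of q is an element of G. -/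
open Quiver

section Quotient

variable {Γt Γ : Type*} [Quiver Γt] [Quiver Γ]
  [HasInvolutiveReverse Γt] [HasInvolutiveReverse Γ]

/-- Two vertices of `Γ̃` are related if some deck transformation of `f` carries one to
the other. -/
def deckRelV (f : Γt ⥤q Γ) (u w : Γt) : Prop :=
  ∃ γ : Γt ⥤q Γt, IsDeckTrans f γ ∧ γ.obj u = w

/-- Two arrows of `Γ̃` are related if some deck transformation of `f` carries one to
the other. -/
def deckRelA (f : Γt ⥤q Γ) (a b : Σ u w : Γt, u ⟶ w) : Prop :=
  ∃ γ : Γt ⥤q Γt, IsDeckTrans f γ ∧ arrowMap γ a = b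

/-- The vertices of the quotient graph `Γ̃/G`: orbits of vertices under the group of
deck transformations of `f`. -/
def QuotV (f : Γt ⥤q Γ) := Quot (deckRelV f)

/-- The arrows of `Γ̃` whose source and target orbits are `x` and `y`. -/
def ArrowsOver (f : Γt ⥤q Γ) (x y : QuotV f) :=
  {a : Σ u w : Γt, u ⟶ w //
    Quot.mk (deckRelV f) a.1 = x ∧ Quot.mk (deckRelV f) a.2.1 = y}

/-- The quotient graph: arrows from `x` to `y` are orbits of arrows of `Γ̃` lying over
`(x, y)`. -/
instance quotQuiver (f : Γt ⥤q Γ) : Quiver (QuotV f) :=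
  ⟨fun x y => Quot (fun a b : ArrowsOver f x y => deckRelA f a.val b.val)⟩

/-- Reversal on the total set of arrows. -/
def revTotal {U : Type*} [Quiver U] [HasInvolutiveReverse U]
    (a : Σ u w : U, u ⟶ w) : Σ u w : U, u ⟶ w :=
  ⟨a.2.1, a.1, reverse a.2.2⟩

theorem deckRelA_revTotal (f : Γt ⥤q Γ) {a b : Σ u w : Γt, u ⟶ w}
    (h : deckRelA f a b) : deckRelA f (revTotal a) (revTotal b) := by
  obtain ⟨γ, hγ, rfl⟩ := h
  refine ⟨γ, hγ, ?_⟩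
  rcases a with ⟨u, w, e⟩
  simp only [arrowMap, revTotal]
  rw [hγ.rev e]

/-- The induced reverse operation on the quotient graph. -/
instance quotHasReverse (f : Γt ⥤q Γ) : HasReverse (QuotV f) where
  reverse' {x y} :=
    Quot.lift
      (fun a : ArrowsOver f x y =>
        (Quot.mk _ (⟨revTotal a.val, a.prop.2, a.prop.1⟩ : ArrowsOver f y x) :
          y ⟶ x))
      (fun a b h => Quot.sound (deckRelA_revTotal f h))

/-- The induced reverse operation on the quotient graph is involutive. -/
instance quotHasInvolutiveReverse (f : Γt ⥤q Γ) :
    HasInvolutiveReverse (QuotV f) where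
  inv' {x y} e := by
    induction e using Quot.ind with
    | _ a =>
      rcases a with ⟨⟨u, w, e⟩, h1, h2⟩
      show Quot.mk _ _ = Quot.mk _ _
      apply congrArg (Quot.mk _)
      apply Subtype.ext
      simp [revTotal]

/-- The quotient map `Γ̃ → Γ̃/G`, sending each vertex and each arrow to its orbit. -/
def quotMap (f : Γt ⥤q Γ) : Γt ⥤q QuotV f where
  obj := Quot.mk (deckRelV f)
  map {u w} e :=
    Quot.mk _ (⟨⟨u, w, e⟩, rfl, rfl⟩ :
      ArrowsOver f (Quot.mk (deckRelV f) u) (Quot.mk (deckRelV f) w))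

end Quotient

section AuxTotal

open Function

variable {U : Type*} [Quiver U]

theorem totalExt {a b : Σ u w : U, u ⟶ w} (h1 : a.1 = b.1) (h2 : a.2.1 = b.2.1)
    (h3 : HEq a.2.2 b.2.2) : a = b := by
  obtain ⟨a1, a2, e⟩ := a
  obtain ⟨b1, b2, e'⟩ := b
  dsimp at h1 h2 h3
  subst h1; subst h2
  rw [eq_of_heq h3]

theorem total_heq_snd {a b : Σ u w : U, u ⟶ w} (h : a = b) : HEq a.2.2 b.2.2 := by
  subst h; rfl

theorem star_heq_snd {u : U} {a b : Quiver.Star u} (h : a = b) : HEq a.2 b.2 := by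
  subst h; rfl

theorem arrowMap_comp {V W : Type*} [Quiver V] [Quiver W] (F : U ⥤q V) (G : V ⥤q W)
    (a : Σ u w : U, u ⟶ w) : arrowMap (F.comp G) a = arrowMap G (arrowMap F a) := rfl

theorem prefunctorExt {V : Type*} [Quiver V] {F G : U ⥤q V}
    (hobj : ∀ u, F.obj u = G.obj u)
    (hmap : ∀ a : Σ u w : U, u ⟶ w, arrowMap F a = arrowMap G a) : F = G := by
  obtain ⟨Fo, Fm⟩ := F
  obtain ⟨Go, Gm⟩ := G
  obtain rfl : Fo = Go := funext hobj
  congr 1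
  funext X Y e
  exact eq_of_heq (total_heq_snd (hmap ⟨X, Y, e⟩))

theorem arrowMap_revTotal' {V : Type*} [Quiver V] [HasInvolutiveReverse U]
    [HasInvolutiveReverse V] {F : U ⥤q V}
    (hrev : ∀ ⦃a b : U⦄ (e : a ⟶ b), F.map (reverse e) = reverse (F.map e))
    (a : Σ u w : U, u ⟶ w) : arrowMap F (revTotal a) = revTotal (arrowMap F a) := by
  obtain ⟨u, w, e⟩ := a
  simp only [arrowMap, revTotal]
  rw [hrev e]

/-- The equivalence between costar and star given by reverse. -/
def costarStarEquiv [HasInvolutiveReverse U] (u : U) : Quiver.Costar u ≃ Quiver.Star u where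
  toFun a := ⟨a.1, reverse a.2⟩
  invFun a := ⟨a.1, reverse a.2⟩
  left_inv := by rintro ⟨v, e⟩; simp [Quiver.reverse_reverse]
  right_inv := by rintro ⟨v, e⟩; simp [Quiver.reverse_reverse]

theorem costar_bijective_of_star {V : Type*} [Quiver V] [HasInvolutiveReverse U]
    [HasInvolutiveReverse V] (φ : U ⥤q V) (hrev : PreservesReverse φ) (u : U)
    (h : Function.Bijective (φ.star u)) : Function.Bijective (φ.costar u) := by
  have key : φ.costar u = ⇑(costarStarEquiv (φ.obj u)).symm ∘ φ.star u ∘ ⇑(costarStarEquiv u) := by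
    funext a
    rcases a with ⟨v, e⟩
    show Quiver.Costar.mk (φ.map e) =
      (costarStarEquiv (φ.obj u)).symm (φ.star u ((costarStarEquiv u) ⟨v, e⟩))
    show Quiver.Costar.mk (φ.map e) = ⟨φ.obj v, reverse (φ.map (reverse e))⟩
    rw [hrev e, Quiver.reverse_reverse]
  rw [key]
  exact ((costarStarEquiv _).symm.bijective.comp h).comp (costarStarEquiv u).bijective

end AuxTotal

section DeckGroup

variable {Γt Γ : Type*} [Quiver Γt] [Quiver Γ]
  [HasInvolutiveReverse Γt] [HasInvolutiveReverse Γ]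

theorem isDeckTrans_id (f : Γt ⥤q Γ) : IsDeckTrans f (Prefunctor.id Γt) where
  rev _ _ _ := rfl
  bijV := Function.bijective_id
  bijA := by
    have h : arrowMap (Prefunctor.id Γt) = id := funext fun a => rfl
    rw [h]; exact Function.bijective_id
  comp_eq := Prefunctor.id_comp f

variable {f : Γt ⥤q Γ}

theorem IsDeckTrans.compDeck {γ δ : Γt ⥤q Γt} (hγ : IsDeckTrans f γ) (hδ : IsDeckTrans f δ) :
    IsDeckTrans f (γ.comp δ) where
  rev _ _ e := by
    show δ.map (γ.map (reverse e)) = reverse (δ.map (γ.map e))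
    rw [hγ.rev, hδ.rev]
  bijV := hδ.bijV.comp hγ.bijV
  bijA := by
    have h : arrowMap (γ.comp δ) = arrowMap δ ∘ arrowMap γ := funext fun a => rfl
    rw [h]; exact hδ.bijA.comp hγ.bijA
  comp_eq := by rw [Prefunctor.comp_assoc, hδ.comp_eq, hγ.comp_eq]

/-- The inverse of a deck transformation. -/
noncomputable def deckInv {γ : Γt ⥤q Γt} (h : IsDeckTrans f γ) : Γt ⥤q Γt where
  obj u := (Equiv.ofBijective γ.obj h.bijV).symm u
  map {u w} e :=
    Quiver.Hom.cast
      ((Equiv.ofBijective γ.obj h.bijV).eq_symm_apply.mpr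
        (congrArg Sigma.fst
          ((Equiv.ofBijective (arrowMap γ) h.bijA).apply_symm_apply ⟨u, w, e⟩)))
      ((Equiv.ofBijective γ.obj h.bijV).eq_symm_apply.mpr
        (congrArg (fun x => x.2.1)
          ((Equiv.ofBijective (arrowMap γ) h.bijA).apply_symm_apply ⟨u, w, e⟩)))
      ((Equiv.ofBijective (arrowMap γ) h.bijA).symm ⟨u, w, e⟩).2.2

theorem deckInv_arrowMap {γ : Γt ⥤q Γt} (h : IsDeckTrans f γ) (a : Σ u w : Γt, u ⟶ w) :
    arrowMap (deckInv h) a = (Equiv.ofBijective (arrowMap γ) h.bijA).symm a := by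
  obtain ⟨u, w, e⟩ := a
  refine totalExt ?_ ?_ (Quiver.Hom.cast_heq _ _ _)
  · exact ((Equiv.ofBijective γ.obj h.bijV).eq_symm_apply.mpr
      (congrArg Sigma.fst
        ((Equiv.ofBijective (arrowMap γ) h.bijA).apply_symm_apply ⟨u, w, e⟩))).symm
  · exact ((Equiv.ofBijective γ.obj h.bijV).eq_symm_apply.mpr
      (congrArg (fun x => x.2.1)
        ((Equiv.ofBijective (arrowMap γ) h.bijA).apply_symm_apply ⟨u, w, e⟩))).symm

theorem IsDeckTrans.invDeck {γ : Γt ⥤q Γt} (h : IsDeckTrans f γ) : IsDeckTrans f (deckInv h) := by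
  have eAfun : arrowMap (deckInv h) = ⇑(Equiv.ofBijective (arrowMap γ) h.bijA).symm :=
    funext (deckInv_arrowMap h)
  have hfixO : ∀ v, f.obj (γ.obj v) = f.obj v := fun v => congrArg (fun F => F.obj v) h.comp_eq
  have hfixA : ∀ b, arrowMap f (arrowMap γ b) = arrowMap f b :=
    fun b => congrArg (fun F => arrowMap F b) h.comp_eq
  refine ⟨?_, ?_, ?_, ?_⟩
  · intro a b e
    have t1 : arrowMap (deckInv h) ⟨b, a, reverse e⟩ =
        revTotal (arrowMap (deckInv h) ⟨a, b, e⟩) := by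
      rw [eAfun]
      apply (Equiv.ofBijective (arrowMap γ) h.bijA).injective
      rw [Equiv.apply_symm_apply]
      show (⟨b, a, reverse e⟩ : Σ u w : Γt, u ⟶ w) =
        arrowMap γ (revTotal ((Equiv.ofBijective (arrowMap γ) h.bijA).symm ⟨a, b, e⟩))
      rw [arrowMap_revTotal' h.rev]
      show _ = revTotal ((Equiv.ofBijective (arrowMap γ) h.bijA)
        ((Equiv.ofBijective (arrowMap γ) h.bijA).symm ⟨a, b, e⟩))
      rw [Equiv.apply_symm_apply]
      rfl
    exact eq_of_heq (total_heq_snd t1)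
  · exact (Equiv.ofBijective γ.obj h.bijV).symm.bijective
  · rw [eAfun]; exact (Equiv.ofBijective (arrowMap γ) h.bijA).symm.bijective
  · refine prefunctorExt (fun u => ?_) (fun a => ?_)
    · calc f.obj ((Equiv.ofBijective γ.obj h.bijV).symm u)
          = f.obj (γ.obj ((Equiv.ofBijective γ.obj h.bijV).symm u)) := (hfixO _).symm
        _ = f.obj u := congrArg f.obj ((Equiv.ofBijective γ.obj h.bijV).apply_symm_apply u)
    · calc arrowMap f (arrowMap (deckInv h) a)
          = arrowMap f (arrowMap γ (arrowMap (deckInv h) a)) := (hfixA _).symm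
        _ = arrowMap f a := by
            rw [deckInv_arrowMap h a]
            exact congrArg (arrowMap f)
              ((Equiv.ofBijective (arrowMap γ) h.bijA).apply_symm_apply a)

theorem deckRelV_equivalence (f : Γt ⥤q Γ) : Equivalence (deckRelV f) where
  refl u := ⟨Prefunctor.id Γt, isDeckTrans_id f, rfl⟩
  symm := by
    rintro u w ⟨γ, hγ, rfl⟩
    exact ⟨deckInv hγ, hγ.invDeck, (Equiv.ofBijective γ.obj hγ.bijV).symm_apply_apply u⟩
  trans := by
    rintro u w v ⟨γ, hγ, rfl⟩ ⟨δ, hδ, rfl⟩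
    exact ⟨γ.comp δ, hγ.compDeck hδ, rfl⟩

theorem deckRelA_equivalence (f : Γt ⥤q Γ) : Equivalence (deckRelA f) where
  refl a := ⟨Prefunctor.id Γt, isDeckTrans_id f, rfl⟩
  symm := by
    rintro a b ⟨γ, hγ, rfl⟩
    refine ⟨deckInv hγ, hγ.invDeck, ?_⟩
    rw [deckInv_arrowMap hγ]
    exact (Equiv.ofBijective (arrowMap γ) hγ.bijA).symm_apply_apply a
  trans := by
    rintro a b c ⟨γ, hγ, rfl⟩ ⟨δ, hδ, rfl⟩
    exact ⟨γ.comp δ, hγ.compDeck hδ, rfl⟩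

theorem immersion_total_inj (himm : IsImmersion f) {a b : Σ u w : Γt, u ⟶ w}
    (h1 : a.1 = b.1) (h2 : arrowMap f a = arrowMap f b) : a = b := by
  obtain ⟨u, w, e⟩ := a
  obtain ⟨u', w', e'⟩ := b
  dsimp at h1
  subst h1
  have hstar : f.star u ⟨w, e⟩ = f.star u ⟨w', e'⟩ :=
    Sigma.ext (congrArg (fun x => x.2.1) h2) (total_heq_snd h2)
  have h3 := himm u hstar
  exact totalExt rfl (congrArg Sigma.fst h3) (star_heq_snd h3)

theorem deck_fix (himm : IsImmersion f) {γ : Γt ⥤q Γt} (h : IsDeckTrans f γ)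
    (a : Σ u w : Γt, u ⟶ w) (hu : γ.obj a.1 = a.1) : arrowMap γ a = a :=
  immersion_total_inj himm hu (congrArg (fun F => arrowMap F a) h.comp_eq)

theorem qmap_heq (f : Γt ⥤q Γ) {x y : QuotV f} (a : Σ u w : Γt, u ⟶ w)
    (h1 : Quot.mk (deckRelV f) a.1 = x) (h2 : Quot.mk (deckRelV f) a.2.1 = y) :
    HEq ((quotMap f).map a.2.2)
      (Quot.mk _ (⟨a, h1, h2⟩ : ArrowsOver f x y) : x ⟶ y) := by
  obtain ⟨u, w, e⟩ := a
  subst h1; subst h2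
  rfl

theorem quot_arrow_inj (f : Γt ⥤q Γ) {x y : QuotV f} {a b : ArrowsOver f x y}
    (h : (Quot.mk _ a : x ⟶ y) = Quot.mk _ b) : deckRelA f a.val b.val := by
  have hE := Quot.eqvGen_exact h
  clear h
  induction hE with
  | rel _ _ hr => exact hr
  | refl _ => exact (deckRelA_equivalence f).refl _
  | symm _ _ _ ih => exact (deckRelA_equivalence f).symm ih
  | trans _ _ _ _ _ ih1 ih2 => exact (deckRelA_equivalence f).trans ih1 ih2

theorem qobj_eq_iff (f : Γt ⥤q Γ) {u w : Γt} :
    (quotMap f).obj u = (quotMap f).obj w ↔ deckRelV f u w :=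
  ⟨fun h => ((deckRelV_equivalence f).eqvGen_iff).mp (Quot.eqvGen_exact h), Quot.sound⟩

theorem qtotal_eq_iff (f : Γt ⥤q Γ) {a b : Σ u w : Γt, u ⟶ w} :
    arrowMap (quotMap f) a = arrowMap (quotMap f) b ↔ deckRelA f a b := by
  constructor
  · intro h
    have h1 : Quot.mk (deckRelV f) a.1 = Quot.mk (deckRelV f) b.1 := congrArg Sigma.fst h
    have h2 : Quot.mk (deckRelV f) a.2.1 = Quot.mk (deckRelV f) b.2.1 :=
      congrArg (fun x => x.2.1) h
    have h3 : HEq ((quotMap f).map a.2.2) ((quotMap f).map b.2.2) := total_heq_snd h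
    have h4 := qmap_heq f b h1.symm h2.symm
    have h5 : (quotMap f).map a.2.2 =
        (Quot.mk _ (⟨b, h1.symm, h2.symm⟩ :
          ArrowsOver f (Quot.mk (deckRelV f) a.1) (Quot.mk (deckRelV f) a.2.1)) :
          (quotMap f).obj a.1 ⟶ (quotMap f).obj a.2.1) :=
      eq_of_heq (h3.trans h4)
    exact quot_arrow_inj f (a := ⟨a, rfl, rfl⟩) (b := ⟨b, h1.symm, h2.symm⟩) h5
  · rintro ⟨γ, hγ, rfl⟩
    have h1 : Quot.mk (deckRelV f) a.1 = Quot.mk (deckRelV f) (γ.obj a.1) :=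
      Quot.sound ⟨γ, hγ, rfl⟩
    have h2 : Quot.mk (deckRelV f) a.2.1 = Quot.mk (deckRelV f) (γ.obj a.2.1) :=
      Quot.sound ⟨γ, hγ, rfl⟩
    refine totalExt h1 h2 ?_
    have hq : (Quot.mk _ (⟨a, rfl, rfl⟩ :
        ArrowsOver f (Quot.mk (deckRelV f) a.1) (Quot.mk (deckRelV f) a.2.1)) :
        (quotMap f).obj a.1 ⟶ (quotMap f).obj a.2.1) =
        Quot.mk _ ⟨arrowMap γ a, h1.symm, h2.symm⟩ :=
      Quot.sound ⟨γ, hγ, rfl⟩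
    have h5 : (quotMap f).map a.2.2 = Quot.mk _ ⟨arrowMap γ a, h1.symm, h2.symm⟩ := by
      obtain ⟨u, w, e⟩ := a
      exact hq
    exact (heq_of_eq h5).trans (qmap_heq f (arrowMap γ a) h1.symm h2.symm).symm

end DeckGroup


/-- For an immersion `f : Γ̃ → Γ` of connected graphs with group `G` of deck
transformations, the quotient map `q : Γ̃ → Γ̃/G` is a graph morphism which is a normal
covering, and `G` is exactly the group of deck transformations of `q`. -/
theorem quotMap_is_normal_covering_and_deck_group {Γt Γ : Type*}
    [Quiver Γt] [Quiver Γ] [HasInvolutiveReverse Γt] [HasInvolutiveReverse Γ]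
    (f : Γt ⥤q Γ) (hrev : PreservesReverse f) (himm : IsImmersion f)
    (hΓt : IsConnectedQuiver Γt) (hΓ : IsConnectedQuiver Γ) :
    PreservesReverse (quotMap f) ∧
      (quotMap f).IsCovering ∧
      (∀ u w : Γt, (quotMap f).obj u = (quotMap f).obj w →
        ∃ γ : Γt ⥤q Γt, IsDeckTrans (quotMap f) γ ∧ γ.obj u = w) ∧
      (∀ γ : Γt ⥤q Γt, IsDeckTrans f γ ↔ IsDeckTrans (quotMap f) γ) := by
  have hrevq : PreservesReverse (quotMap f) := fun a b e => rfl
  have fwd : ∀ γ : Γt ⥤q Γt, IsDeckTrans f γ → IsDeckTrans (quotMap f) γ := by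
    intro γ hγ
    refine ⟨hγ.rev, hγ.bijV, hγ.bijA, ?_⟩
    refine prefunctorExt (fun u => ?_) (fun a => ?_)
    · exact (Quot.sound ⟨γ, hγ, rfl⟩ :
        Quot.mk (deckRelV f) u = Quot.mk (deckRelV f) (γ.obj u)).symm
    · exact (qtotal_eq_iff f).mpr ((deckRelA_equivalence f).symm ⟨γ, hγ, rfl⟩)
  have bwd : ∀ γ : Γt ⥤q Γt, IsDeckTrans (quotMap f) γ → IsDeckTrans f γ := by
    intro γ hγ
    refine ⟨hγ.rev, hγ.bijV, hγ.bijA, ?_⟩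
    refine prefunctorExt (fun u => ?_) (fun a => ?_)
    · have h : (quotMap f).obj (γ.obj u) = (quotMap f).obj u :=
        congrArg (fun F => F.obj u) hγ.comp_eq
      obtain ⟨δ, hδ, hδu⟩ := (qobj_eq_iff f).mp h
      have h2 : f.obj (δ.obj (γ.obj u)) = f.obj (γ.obj u) :=
        congrArg (fun F => F.obj (γ.obj u)) hδ.comp_eq
      rw [hδu] at h2
      exact h2.symm
    · have h : arrowMap (quotMap f) (arrowMap γ a) = arrowMap (quotMap f) a :=
        congrArg (fun F => arrowMap F a) hγ.comp_eq
      obtain ⟨δ, hδ, hδa⟩ := (qtotal_eq_iff f).mp h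
      have h2 : arrowMap f (arrowMap δ (arrowMap γ a)) = arrowMap f (arrowMap γ a) :=
        congrArg (fun F => arrowMap F (arrowMap γ a)) hδ.comp_eq
      rw [hδa] at h2
      exact h2.symm
  have hstar : ∀ u : Γt, Function.Bijective ((quotMap f).star u) := by
    intro u
    constructor
    · rintro ⟨w, e⟩ ⟨w', e'⟩ h
      have htot : arrowMap (quotMap f) ⟨u, w, e⟩ = arrowMap (quotMap f) ⟨u, w', e'⟩ :=
        totalExt rfl (congrArg Sigma.fst h) (star_heq_snd h)
      obtain ⟨γ, hγ, hmap⟩ := (qtotal_eq_iff f).mp htot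
      have hfix : γ.obj u = u := congrArg Sigma.fst hmap
      have hid := deck_fix himm hγ ⟨u, w, e⟩ hfix
      have h2 : (⟨u, w, e⟩ : Σ u w : Γt, u ⟶ w) = ⟨u, w', e'⟩ := hid.symm.trans hmap
      exact Sigma.ext (congrArg (fun x => x.2.1) h2) (total_heq_snd h2)
    · rintro ⟨y, ε⟩
      induction ε using Quot.ind with
      | _ c =>
        rcases c with ⟨⟨v, w, e⟩, hc1, hc2⟩
        obtain ⟨γ, hγ, hγv⟩ := (qobj_eq_iff f).mp hc1
        refine ⟨⟨γ.obj w, (γ.map e).cast hγv rfl⟩, ?_⟩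
        have hrel : deckRelA f ⟨v, w, e⟩ ⟨u, γ.obj w, (γ.map e).cast hγv rfl⟩ :=
          ⟨γ, hγ, totalExt hγv rfl ((Quiver.Hom.cast_heq hγv rfl (γ.map e)).symm)⟩
        have htot := (qtotal_eq_iff f).mpr ((deckRelA_equivalence f).symm hrel)
        refine Sigma.ext ?_ ?_
        · exact (congrArg (fun x => x.2.1) htot).trans hc2
        · exact (total_heq_snd htot).trans (qmap_heq f ⟨v, w, e⟩ hc1 hc2)
  refine ⟨hrevq, ⟨hstar, fun u => costar_bijective_of_star _ hrevq u (hstar u)⟩, ?_, ?_⟩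
  · intro u w h
    obtain ⟨γ, hγ, hγu⟩ := (qobj_eq_iff f).mp h
    exact ⟨γ, fwd γ hγ, hγu⟩
  · exact fun γ => ⟨fwd γ, bwd γ⟩
end
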